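/- arXiv:2305.08934 — 6 statements merged into one kernel-verified Lean document; each statement's English description precedes it below -/
import Mathlib

section
/- Let d ≥ 2 be an integer and α ∈ (0,2). Then there exists a constant C = C(α,d) > 0 such that for every x¹ ∈ ℝ, ∫_{ℝ^{d-1}} min(1, |(x¹,x')|^{-d-α}) dx' ≤ C · min(1, |x¹|^{-1-α}), where the integral is over x' ∈ ℝ^{d-1} and |(x¹,x')| denotes the Euclidean norm of the vector (x¹,x') ∈ ℝ^d obtained by prepending the coordinate x¹ to x'. -/
open MeasureTheory ENNReal

private lemma my_lintegral_comp_smul {E : Type*} [NormedAddCommGroup E] [NormedSpace ℝ E]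
    [MeasurableSpace E] [BorelSpace E] [FiniteDimensional ℝ E]
    (μ : Measure E) [μ.IsAddHaarMeasure] (f : E → ℝ≥0∞) (hf : Measurable f) {R : ℝ}
    (hR : R ≠ 0) :
    ∫⁻ x, f (R • x) ∂μ =
      ENNReal.ofReal |(R ^ Module.finrank ℝ E)⁻¹| * ∫⁻ x, f x ∂μ := by
  rw [← lintegral_map hf (measurable_const_smul R),
    MeasureTheory.Measure.map_addHaar_smul μ hR, lintegral_smul_measure, smul_eq_mul]

private lemma keyA {p : ℝ} (hp : 0 < p) {s t : ℝ} (hs : 0 ≤ s) (hst : s ≤ t) :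
    min 1 (ENNReal.ofReal t ^ (-p)) ≤
      ENNReal.ofReal (2 ^ p) * ENNReal.ofReal ((1 + s) ^ (-p)) := by
  rw [← ENNReal.ofReal_mul (by positivity)]
  rcases le_or_gt s 1 with h | h
  · refine le_trans (min_le_left _ _) ?_
    rw [show (1 : ℝ≥0∞) = ENNReal.ofReal 1 by simp]
    apply ENNReal.ofReal_le_ofReal
    have h1 : (1 + s) ^ p ≤ (2 : ℝ) ^ p :=
      Real.rpow_le_rpow (by linarith) (by linarith) hp.le
    have h2 : (0 : ℝ) < (1 + s) ^ p := Real.rpow_pos_of_pos (by linarith) _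
    rw [Real.rpow_neg (by linarith), ← div_eq_mul_inv, le_div_iff₀ h2, one_mul]
    exact h1
  · have hs0 : (0 : ℝ) < s := by linarith
    refine le_trans (min_le_right _ _) ?_
    have h1 : ENNReal.ofReal t ^ (-p) ≤ ENNReal.ofReal s ^ (-p) := by
      rw [ENNReal.rpow_neg, ENNReal.rpow_neg]
      exact ENNReal.inv_le_inv.mpr
        (ENNReal.rpow_le_rpow (ENNReal.ofReal_le_ofReal hst) hp.le)
    refine h1.trans ?_
    rw [ENNReal.ofReal_rpow_of_pos hs0]
    apply ENNReal.ofReal_le_ofReal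
    have hsp : (0 : ℝ) < s ^ p := Real.rpow_pos_of_pos hs0 p
    have h1sp : (0 : ℝ) < (1 + s) ^ p := Real.rpow_pos_of_pos (by linarith) p
    have h2 : (1 + s) ^ p ≤ 2 ^ p * s ^ p := by
      rw [← Real.mul_rpow (by norm_num) hs0.le]
      exact Real.rpow_le_rpow (by linarith) (by linarith) hp.le
    rw [Real.rpow_neg hs0.le, Real.rpow_neg (by linarith : (0:ℝ) ≤ 1 + s),
      ← div_eq_mul_inv, le_div_iff₀ h1sp, inv_mul_eq_div, div_le_iff₀ hsp]
    linarith

/-- For `d ≥ 2` and `α ∈ (0,2)` there is `C = C(α,d) > 0` such that for every `x¹ ∈ ℝ`,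
`∫_{ℝ^{d-1}} min(1, |(x¹,x')|^{-d-α}) dx' ≤ C · min(1, |x¹|^{-1-α})`,
where `|(x¹,x')| = √((x¹)² + |x'|²)` is the Euclidean norm of the prepended vector. -/
theorem stmt_0 (d : ℕ) (hd : 2 ≤ d) (α : ℝ) (hα : α ∈ Set.Ioo (0 : ℝ) 2) :
    ∃ C : ℝ, 0 < C ∧ ∀ x1 : ℝ,
      ∫⁻ x' : EuclideanSpace ℝ (Fin (d - 1)),
          min 1 (ENNReal.ofReal (Real.sqrt (x1 ^ 2 + ‖x'‖ ^ 2)) ^ (-(d : ℝ) - α))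
        ≤ ENNReal.ofReal C * min 1 (ENNReal.ofReal |x1| ^ (-1 - α)) := by
  obtain ⟨hα0, hα2⟩ := hα
  have hd2 : (2 : ℝ) ≤ (d : ℝ) := by exact_mod_cast hd
  set p : ℝ := (d : ℝ) + α with hpdef
  have hp : 0 < p := by positivity
  have hexp : -(d : ℝ) - α = -p := by rw [hpdef]; ring
  have hn : ((d - 1 : ℕ) : ℝ) = (d : ℝ) - 1 := by
    have h1 : (1 : ℕ) ≤ d := by omega
    push_cast [Nat.cast_sub h1]
    ring
  have hJ : (∫⁻ x : EuclideanSpace ℝ (Fin (d - 1)),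
      ENNReal.ofReal ((1 + ‖x‖) ^ (-p))) < ∞ := by
    apply finite_integral_one_add_norm
    rw [finrank_euclideanSpace_fin, hn]
    linarith
  set J := ∫⁻ x : EuclideanSpace ℝ (Fin (d - 1)),
      ENNReal.ofReal ((1 + ‖x‖) ^ (-p)) with hJdef
  have hJm : Measurable fun x : EuclideanSpace ℝ (Fin (d - 1)) =>
      ENNReal.ofReal ((1 + ‖x‖) ^ (-p)) := by
    apply Measurable.ennreal_ofReal
    exact (Continuous.rpow_const (continuous_const.add continuous_norm)
      (fun x : EuclideanSpace ℝ (Fin (d - 1)) => Or.inl (ne_of_gt (add_pos_of_pos_of_nonneg one_pos (norm_nonneg x))))).measurable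
  refine ⟨2 ^ p * (J.toReal + 1), by positivity, fun x1 => ?_⟩
  have hCge : ENNReal.ofReal (2 ^ p) * J ≤
      ENNReal.ofReal (2 ^ p * (J.toReal + 1)) := by
    rw [ENNReal.ofReal_mul (by positivity)]
    refine mul_le_mul_right ?_ _
    calc J = ENNReal.ofReal J.toReal := (ENNReal.ofReal_toReal hJ.ne).symm
      _ ≤ ENNReal.ofReal (J.toReal + 1) := ENNReal.ofReal_le_ofReal (by linarith)
  simp only [hexp]
  have hfm : Measurable fun x' : EuclideanSpace ℝ (Fin (d - 1)) =>
      min 1 (ENNReal.ofReal (Real.sqrt (x1 ^ 2 + ‖x'‖ ^ 2)) ^ (-p)) := by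
    apply Measurable.min measurable_const
    apply (ENNReal.continuous_rpow_const.measurable).comp
    apply Measurable.ennreal_ofReal
    exact (Real.continuous_sqrt.comp
      (continuous_const.add ((continuous_norm).pow 2))).measurable
  have hsqrt_ge : ∀ x' : EuclideanSpace ℝ (Fin (d - 1)),
      ‖x'‖ ≤ Real.sqrt (x1 ^ 2 + ‖x'‖ ^ 2) := by
    intro x'
    have : ‖x'‖ = Real.sqrt (‖x'‖ ^ 2) := (Real.sqrt_sq (norm_nonneg x')).symm
    rw [this]
    exact Real.sqrt_le_sqrt (by nlinarith [sq_nonneg x1, Real.sqrt_nonneg (‖x'‖^2)])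
  rcases le_or_gt |x1| 1 with hx | hx
  · -- small |x1| : RHS min is 1
    have hmin : min 1 (ENNReal.ofReal |x1| ^ (-1 - α)) = 1 := by
      rw [min_eq_left]
      rcases eq_or_lt_of_le (abs_nonneg x1) with h0 | h0
      · rw [← h0]
        simp [ENNReal.zero_rpow_of_neg (by linarith : -1 - α < 0)]
      · exact ENNReal.one_le_rpow_of_pos_of_le_one_of_neg
          (ENNReal.ofReal_pos.mpr h0) (ENNReal.ofReal_le_one.mpr hx) (by linarith)
    rw [hmin, mul_one]
    calc ∫⁻ x' : EuclideanSpace ℝ (Fin (d - 1)),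
          min 1 (ENNReal.ofReal (Real.sqrt (x1 ^ 2 + ‖x'‖ ^ 2)) ^ (-p))
        ≤ ∫⁻ x' : EuclideanSpace ℝ (Fin (d - 1)),
            ENNReal.ofReal (2 ^ p) * ENNReal.ofReal ((1 + ‖x'‖) ^ (-p)) :=
          lintegral_mono fun x' => keyA hp (norm_nonneg x') (hsqrt_ge x')
      _ = ENNReal.ofReal (2 ^ p) * J := lintegral_const_mul _ hJm
      _ ≤ ENNReal.ofReal (2 ^ p * (J.toReal + 1)) := hCge
  · -- large |x1|
    set R := |x1| with hRdef
    have hR1 : (1 : ℝ) ≤ R := hx.le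
    have hR0 : (0 : ℝ) < R := by linarith
    have hRne : R ≠ 0 := hR0.ne'
    have hone : (1 : ℝ≥0∞) ≤ ENNReal.ofReal R := ENNReal.one_le_ofReal.mpr hR1
    have hne0 : ENNReal.ofReal R ≠ 0 := (lt_of_lt_of_le one_pos hone).ne'
    set n := d - 1 with hndef
    -- scaling
    have hscale := my_lintegral_comp_smul (volume : Measure (EuclideanSpace ℝ (Fin n)))
      _ hfm hRne
    rw [finrank_euclideanSpace_fin] at hscale
    have hRn : (0 : ℝ) < R ^ n := by positivity
    have heq : (∫⁻ x' : EuclideanSpace ℝ (Fin n),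
        min 1 (ENNReal.ofReal (Real.sqrt (x1 ^ 2 + ‖x'‖ ^ 2)) ^ (-p)))
        = ENNReal.ofReal (R ^ n) * ∫⁻ y : EuclideanSpace ℝ (Fin n),
            min 1 (ENNReal.ofReal (Real.sqrt (x1 ^ 2 + ‖R • y‖ ^ 2)) ^ (-p)) := by
      rw [hscale, abs_of_pos (inv_pos.mpr hRn), ← mul_assoc,
        ← ENNReal.ofReal_mul hRn.le, mul_inv_cancel₀ hRn.ne', ENNReal.ofReal_one, one_mul]
    -- pointwise rewriting of the scaled integrand
    have hpt : ∀ y : EuclideanSpace ℝ (Fin n),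
        ENNReal.ofReal (Real.sqrt (x1 ^ 2 + ‖R • y‖ ^ 2)) ^ (-p)
          = ENNReal.ofReal R ^ (-p) *
            ENNReal.ofReal (Real.sqrt (1 + ‖y‖ ^ 2)) ^ (-p) := by
      intro y
      have h1 : ‖R • y‖ = R * ‖y‖ := by
        rw [norm_smul, Real.norm_eq_abs, hRdef, abs_abs]
      have h2 : x1 ^ 2 + (R * ‖y‖) ^ 2 = R ^ 2 * (1 + ‖y‖ ^ 2) := by
        rw [hRdef, mul_pow, sq_abs]; ring
      have h3 : Real.sqrt (R ^ 2 * (1 + ‖y‖ ^ 2)) = R * Real.sqrt (1 + ‖y‖ ^ 2) := by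
        rw [Real.sqrt_mul (sq_nonneg R), Real.sqrt_sq hR0.le]
      rw [h1, h2, h3, ENNReal.ofReal_mul hR0.le,
        ENNReal.mul_rpow_of_ne_top ENNReal.ofReal_ne_top ENNReal.ofReal_ne_top]
    -- bound the scaled integral
    have hbound : (∫⁻ y : EuclideanSpace ℝ (Fin n),
        min 1 (ENNReal.ofReal (Real.sqrt (x1 ^ 2 + ‖R • y‖ ^ 2)) ^ (-p)))
        ≤ ENNReal.ofReal R ^ (-p) * (ENNReal.ofReal (2 ^ p) * J) := by
      calc (∫⁻ y : EuclideanSpace ℝ (Fin n),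
            min 1 (ENNReal.ofReal (Real.sqrt (x1 ^ 2 + ‖R • y‖ ^ 2)) ^ (-p)))
          ≤ ∫⁻ y : EuclideanSpace ℝ (Fin n), ENNReal.ofReal R ^ (-p) *
              (ENNReal.ofReal (2 ^ p) * ENNReal.ofReal ((1 + ‖y‖) ^ (-p))) := by
            apply lintegral_mono
            intro y
            dsimp only
            rw [hpt y]
            refine le_trans (min_le_right _ _) (mul_le_mul_right ?_ _)
            have hsy : ‖y‖ ≤ Real.sqrt (1 + ‖y‖ ^ 2) := by
              have : ‖y‖ = Real.sqrt (‖y‖ ^ 2) := (Real.sqrt_sq (norm_nonneg y)).symm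
              rw [this]
              exact Real.sqrt_le_sqrt (by nlinarith [Real.sqrt_nonneg (‖y‖^2)])
            have h1t : (1 : ℝ) ≤ Real.sqrt (1 + ‖y‖ ^ 2) := by
              have h := Real.sqrt_le_sqrt (show (1:ℝ) ≤ 1 + ‖y‖ ^ 2 by nlinarith [sq_nonneg ‖y‖])
              simp only [Real.sqrt_one] at h; exact h
            have hle1 : ENNReal.ofReal (Real.sqrt (1 + ‖y‖ ^ 2)) ^ (-p) ≤ 1 :=
              ENNReal.rpow_le_one_of_one_le_of_neg
                (ENNReal.one_le_ofReal.mpr h1t) (by linarith)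
            calc ENNReal.ofReal (Real.sqrt (1 + ‖y‖ ^ 2)) ^ (-p)
                = min 1 (ENNReal.ofReal (Real.sqrt (1 + ‖y‖ ^ 2)) ^ (-p)) :=
                  (min_eq_right hle1).symm
              _ ≤ _ := keyA hp (norm_nonneg y) hsy
        _ = ENNReal.ofReal R ^ (-p) * (ENNReal.ofReal (2 ^ p) * J) := by
            rw [lintegral_const_mul _ (hJm.const_mul _), lintegral_const_mul _ hJm]
    -- combine powers of R
    have hcomb : ENNReal.ofReal (R ^ n) * ENNReal.ofReal R ^ (-p)
        = ENNReal.ofReal R ^ (-1 - α) := by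
      rw [ENNReal.ofReal_pow hR0.le, ← ENNReal.rpow_natCast,
        ← ENNReal.rpow_add _ _ hne0 ENNReal.ofReal_ne_top]
      congr 1
      rw [hndef, hn, hpdef]
      ring
    have hminR : min 1 (ENNReal.ofReal |x1| ^ (-1 - α))
        = ENNReal.ofReal R ^ (-1 - α) :=
      min_eq_right (ENNReal.rpow_le_one_of_one_le_of_neg hone (by linarith))
    rw [hminR]
    calc (∫⁻ x' : EuclideanSpace ℝ (Fin n),
          min 1 (ENNReal.ofReal (Real.sqrt (x1 ^ 2 + ‖x'‖ ^ 2)) ^ (-p)))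
        = ENNReal.ofReal (R ^ n) * ∫⁻ y : EuclideanSpace ℝ (Fin n),
            min 1 (ENNReal.ofReal (Real.sqrt (x1 ^ 2 + ‖R • y‖ ^ 2)) ^ (-p)) := heq
      _ ≤ ENNReal.ofReal (R ^ n) *
            (ENNReal.ofReal R ^ (-p) * (ENNReal.ofReal (2 ^ p) * J)) :=
          mul_le_mul_right hbound _
      _ = ENNReal.ofReal (R ^ n) * ENNReal.ofReal R ^ (-p) *
            (ENNReal.ofReal (2 ^ p) * J) := by ring
      _ = ENNReal.ofReal R ^ (-1 - α) * (ENNReal.ofReal (2 ^ p) * J) := by rw [hcomb]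
      _ ≤ ENNReal.ofReal R ^ (-1 - α) * ENNReal.ofReal (2 ^ p * (J.toReal + 1)) :=
          mul_le_mul_right hCge _
      _ = ENNReal.ofReal (2 ^ p * (J.toReal + 1)) * ENNReal.ofReal R ^ (-1 - α) :=
          mul_comm _ _
end

section
/- Let d ≥ 1 be an integer, α ∈ (0,2), and ν₀, ν₁ ∈ ℝ satisfy ν₀ + ν₁ > -2/α, ν₁ < 2, and ν₁ ≠ -2/α. Then there exists a constant C = C(d,α,ν₀,ν₁) > 0 such that for every t > 0 and every x ∈ ℝ^d with x¹ > 0, ∫_{{z ∈ ℝ^d : z¹ < 0}} min(t^{-d/α-1}, |x-z|^{-d-α}) · min(1, |z¹|^{α/2}/√t)^{ν₀} · |z¹|^{ν₁α/2} dz ≤ C · min( t^{ν₁/2-1}, max( (x¹)^{ν₁α/2-α}, t^{ν₁/2+1/α}·(x¹)^{-1-α} ) ). -/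
open MeasureTheory ENNReal
open Set

lemma lint_Ioc_rpow (p L : ℝ) (hp : -1 < p) (hL : 0 ≤ L) :
    ∫⁻ x in Ioc (0:ℝ) L, ENNReal.ofReal (x ^ p) ≤ ENNReal.ofReal (L ^ (p+1) / (p+1)) := by
  have hint : IntegrableOn (fun x : ℝ => x ^ p) (Ioc 0 L) := by
    have := (intervalIntegral.intervalIntegrable_rpow' hp (a := 0) (b := L))
    rwa [intervalIntegrable_iff, uIoc_of_le hL] at this
  have hnn : 0 ≤ᵐ[volume.restrict (Ioc (0:ℝ) L)] fun x : ℝ => x ^ p := by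
    filter_upwards [ae_restrict_mem measurableSet_Ioc] with x hx
    exact Real.rpow_nonneg hx.1.le p
  rw [← ofReal_integral_eq_lintegral_ofReal hint hnn]
  apply ENNReal.ofReal_le_ofReal
  rw [← intervalIntegral.integral_of_le hL, integral_rpow (Or.inl hp)]
  rw [Real.zero_rpow (by linarith)]
  simp

lemma lint_Ioi_rpow (p c : ℝ) (hp : p < -1) (hc : 0 < c) :
    ∫⁻ x in Ioi c, ENNReal.ofReal (x ^ p) ≤ ENNReal.ofReal (c ^ (p+1) / (-(p+1))) := by
  have hint : IntegrableOn (fun x : ℝ => x ^ p) (Ioi c) :=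
    integrableOn_Ioi_rpow_of_lt hp hc
  have hnn : 0 ≤ᵐ[volume.restrict (Ioi c)] fun x : ℝ => x ^ p := by
    filter_upwards [ae_restrict_mem measurableSet_Ioi] with x hx
    exact Real.rpow_nonneg (hc.trans hx).le p
  rw [← ofReal_integral_eq_lintegral_ofReal hint hnn]
  apply ENNReal.ofReal_le_ofReal
  rw [integral_Ioi_rpow_of_lt hp hc]
  rw [div_neg, neg_div]

lemma inner_est (m : ℕ) (e : ℝ) (hme : (m:ℝ) < e)
    (A r : ℝ) (hA : 0 < A) (hr : 0 < r) (c : Fin m → ℝ)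
    (f : (Fin m → ℝ) → ℝ) (hfm : Measurable f) (hf0 : ∀ v, 0 ≤ f v)
    (hfA : ∀ v, f v ≤ min A (r ^ (-e)))
    (hfc : ∀ v i, f v ≤ (max r |v i - c i|) ^ (-e)) :
    ∫⁻ v, ENNReal.ofReal (f v) ≤
      ENNReal.ofReal (2^m * (e/(e - m)) * (min A (r ^ (-e))) ^ (1 - (m:ℝ)/e)) := by
  have he : (0:ℝ) < e := lt_of_le_of_lt (Nat.cast_nonneg m) hme
  set L := min A (r ^ (-e)) with hLdef
  have hL : 0 < L := lt_min hA (Real.rpow_pos_of_pos hr _)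
  rw [lintegral_eq_lintegral_meas_lt volume (Filter.Eventually.of_forall hf0)
    hfm.aemeasurable]
  have key : ∫⁻ lam in Ioi (0:ℝ), volume {v | lam < f v} ≤
      ∫⁻ lam in Ioi (0:ℝ),
        (Ioo (0:ℝ) L).indicator (fun l => ENNReal.ofReal (2^m * l ^ (-(m:ℝ)/e))) lam := by
    apply lintegral_mono_ae
    filter_upwards [ae_restrict_mem measurableSet_Ioi] with lam hlam
    rcases le_or_gt L lam with hcase | hcase
    · have : {v : Fin m → ℝ | lam < f v} = ∅ := by
        ext v
        simp only [mem_setOf_eq, mem_empty_iff_false, iff_false, not_lt]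
        exact ((hfA v).trans hcase).trans le_rfl
      rw [this]
      simp
    · have hlam0 : (0:ℝ) < lam := hlam
      set R : ℝ := lam ^ (-1/e) with hRdef
      have hR : 0 < R := Real.rpow_pos_of_pos hlam0 _
      have hsub : {v : Fin m → ℝ | lam < f v} ⊆
          Set.pi univ (fun i => Ioo (c i - R) (c i + R)) := by
        intro v hv
        intro i _
        have hX : 0 < max r |v i - c i| := lt_of_lt_of_le hr (le_max_left _ _)
        have hXR : max r |v i - c i| < R := by
          by_contra hcon
          push_neg at hcon
          have : (max r |v i - c i|) ^ (-e) ≤ R ^ (-e) :=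
            Real.rpow_le_rpow_of_nonpos hR hcon (by linarith)
          have hRe : R ^ (-e) = lam := by
            rw [hRdef, ← Real.rpow_mul hlam0.le]
            rw [show (-1/e) * (-e) = 1 by field_simp]
            exact Real.rpow_one lam
          have := lt_of_lt_of_le (lt_of_lt_of_le hv (hfc v i)) this
          rw [hRe] at this
          exact lt_irrefl _ this
        have habs : |v i - c i| < R := lt_of_le_of_lt (le_max_right _ _) hXR
        rw [abs_sub_lt_iff] at habs
        constructor <;> [linarith [habs.1, habs.2]; linarith [habs.1, habs.2]]
      calc volume {v : Fin m → ℝ | lam < f v}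
          ≤ volume (Set.pi univ (fun i => Ioo (c i - R) (c i + R))) := measure_mono hsub
        _ = ∏ i : Fin m, volume (Ioo (c i - R) (c i + R)) := volume_pi_pi _
        _ = ENNReal.ofReal (2^m * lam ^ (-(m:ℝ)/e)) := by
            simp only [Real.volume_Ioo]
            have : ∀ i : Fin m, c i + R - (c i - R) = 2 * R := fun i => by ring
            simp only [this]
            rw [Finset.prod_const, Finset.card_univ, Fintype.card_fin,
              ← ENNReal.ofReal_pow (by positivity)]
            congr 1
            rw [mul_pow, hRdef, ← Real.rpow_natCast (lam ^ (-1/e)) m,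
              ← Real.rpow_mul hlam0.le]
            ring_nf
        _ = (Ioo (0:ℝ) L).indicator (fun l => ENNReal.ofReal (2^m * l ^ (-(m:ℝ)/e))) lam := by
            exact (indicator_of_mem (show lam ∈ Ioo (0:ℝ) L from ⟨hlam0, hcase⟩)
              (fun l => ENNReal.ofReal (2^m * l ^ (-(m:ℝ)/e)))).symm
  refine le_trans key ?_
  rw [lintegral_indicator measurableSet_Ioo, Measure.restrict_restrict measurableSet_Ioo,
    inter_eq_left.2 (fun y hy => hy.1)]
  have step : ∫⁻ lam in Ioo (0:ℝ) L, ENNReal.ofReal (2^m * lam ^ (-(m:ℝ)/e)) ≤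
      ENNReal.ofReal (2^m) * ENNReal.ofReal (L ^ (-(m:ℝ)/e + 1) / (-(m:ℝ)/e + 1)) := by
    have : ∀ lam : ℝ, ENNReal.ofReal (2^m * lam ^ (-(m:ℝ)/e)) =
        ENNReal.ofReal ((2:ℝ)^m) * ENNReal.ofReal (lam ^ (-(m:ℝ)/e)) := fun lam => by
      rw [← ENNReal.ofReal_mul (by positivity)]
    simp only [this]
    rw [lintegral_const_mul' _ _ ENNReal.ofReal_ne_top]
    apply mul_le_mul_right
    refine le_trans (lintegral_mono' (Measure.restrict_mono Ioo_subset_Ioc_self le_rfl) le_rfl) ?_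
    have hexp : (-1:ℝ) < -(m:ℝ)/e := by
      rw [neg_div, neg_lt_neg_iff, div_lt_one he]
      exact hme
    exact le_trans (lint_Ioc_rpow _ _ hexp hL.le) (by rw [add_comm])
  refine le_trans step ?_
  rw [← ENNReal.ofReal_mul (by positivity)]
  apply ENNReal.ofReal_le_ofReal
  have h1 : -(m:ℝ)/e + 1 = 1 - (m:ℝ)/e := by ring
  rw [h1]
  have h2 : 1 - (m:ℝ)/e = (e - m)/e := by field_simp
  have hem : (0:ℝ) < e - m := by linarith
  rw [h2]
  have hem : (0:ℝ) < e - m := by linarith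
  apply le_of_eq
  rw [div_div_eq_mul_div]
  field_simp

lemma lint_piece {S : Set ℝ} (hS : MeasurableSet S) (g h : ℝ → ℝ) (K : ℝ) (hK : 0 ≤ K)
    (hle : ∀ u ∈ S, g u ≤ K * h u) :
    ∫⁻ u in S, ENNReal.ofReal (g u) ≤ ENNReal.ofReal K * ∫⁻ u in S, ENNReal.ofReal (h u) := by
  rw [← lintegral_const_mul' _ _ ENNReal.ofReal_ne_top]
  apply lintegral_mono_ae
  filter_upwards [ae_restrict_mem hS] with u hu
  rw [← ENNReal.ofReal_mul hK]
  exact ENNReal.ofReal_le_ofReal (hle u hu)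

lemma oneD (α ν₀ ν₁ : ℝ) (hα0 : 0 < α) (hα2 : α < 2)
    (h1 : ν₀ + ν₁ > -2 / α) (h2 : ν₁ < 2) (h3 : ν₁ ≠ -2 / α) :
    ∃ C : ℝ, 0 < C ∧ ∀ s a : ℝ, 0 < s → 0 < a →
      ∫⁻ u in Ioi (0:ℝ), ENNReal.ofReal
          (min (s ^ (-1-α)) ((a+u) ^ (-1-α)) * (min 1 (u^(α/2) / s^(α/2)))^ν₀ * u^(ν₁*α/2))
        ≤ ENNReal.ofReal (C * min (s ^ (ν₁*α/2 - α))
            (max (a ^ (ν₁*α/2 - α)) (s ^ (ν₁*α/2 + 1) * a ^ (-1-α)))) := by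
  set p := (ν₀ + ν₁) * α / 2 with hpdef
  set q := ν₁ * α / 2 with hqdef
  have hp : -1 < p := by
    have := mul_lt_mul_of_pos_right h1 (by positivity : (0:ℝ) < α / 2)
    rw [hpdef]
    calc (-1:ℝ) = -2/α * (α/2) := by field_simp
    _ < (ν₀ + ν₁) * (α/2) := this
    _ = (ν₀ + ν₁) * α / 2 := by ring
  have hq : q ≠ -1 := by
    intro hcon
    apply h3
    rw [hqdef] at hcon
    field_simp
    linarith [hcon]
  have hqα : q < α := by
    rw [hqdef]; nlinarith
  have hp1 : 0 < p + 1 := by linarith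
  have hq1 : 0 < |q + 1| := abs_pos.2 (fun h => hq (by linarith))
  have hαq : 0 < α - q := by linarith
  refine ⟨1/(p+1) + 1/|q+1| + 1/(α-q),
    add_pos (add_pos (div_pos one_pos hp1) (div_pos one_pos hq1)) (div_pos one_pos hαq), ?_⟩
  intro s a hs ha
  set b := max a s with hbdef
  have hb : 0 < b := lt_of_lt_of_le ha (le_max_left _ _)
  have hsb : s ≤ b := le_max_right _ _
  have hab : a ≤ b := le_max_left _ _
  set M := min (s ^ (q - α)) (max (a ^ (q - α)) (s ^ (q + 1) * a ^ (-1-α))) with hMdef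
  have hM : 0 < M := lt_min (Real.rpow_pos_of_pos hs _)
    (lt_of_lt_of_le (Real.rpow_pos_of_pos ha _) (le_max_left _ _))
  have claimB : b ^ (q - α) ≤ M := by
    apply le_min
    · exact Real.rpow_le_rpow_of_nonpos hs hsb (by linarith)
    · exact le_trans (Real.rpow_le_rpow_of_nonpos ha hab (by linarith)) (le_max_left _ _)
  have claimA : b ^ (-1-α) * s ^ (q+1) ≤ M := by
    apply le_min
    · calc b ^ (-1-α) * s ^ (q+1) ≤ s ^ (-1-α) * s ^ (q+1) := by
            apply mul_le_mul_of_nonneg_right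
              (Real.rpow_le_rpow_of_nonpos hs hsb (by linarith))
              (Real.rpow_nonneg hs.le _)
        _ = s ^ (q - α) := by
            rw [← Real.rpow_add hs]; congr 1; ring
    · refine le_trans ?_ (le_max_right _ _)
      rw [mul_comm (s ^ (q+1))]
      exact mul_le_mul_of_nonneg_right
        (Real.rpow_le_rpow_of_nonpos ha hab (by linarith))
        (Real.rpow_nonneg hs.le _)
  -- split the integral
  have hsplit1 : Ioi (0:ℝ) = Ioc 0 s ∪ Ioi s := (Ioc_union_Ioi_eq_Ioi hs.le).symm
  have hsplit2 : Ioi s = Ioc s b ∪ Ioi b := (Ioc_union_Ioi_eq_Ioi hsb).symm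
  rw [hsplit1, lintegral_union measurableSet_Ioi (Ioc_disjoint_Ioi le_rfl),
    hsplit2, lintegral_union measurableSet_Ioi (Ioc_disjoint_Ioi le_rfl)]
  -- Piece 1
  have P1 : ∫⁻ u in Ioc (0:ℝ) s, ENNReal.ofReal
        (min (s ^ (-1-α)) ((a+u) ^ (-1-α)) * (min 1 (u^(α/2) / s^(α/2)))^ν₀ * u^q)
      ≤ ENNReal.ofReal (1/(p+1) * M) := by
    have step := lint_piece (S := Ioc (0:ℝ) s) measurableSet_Ioc
      (fun u => min (s ^ (-1-α)) ((a+u) ^ (-1-α)) * (min 1 (u^(α/2) / s^(α/2)))^ν₀ * u^q)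
      (fun u => u ^ p) (b ^ (-1-α) * s ^ (-(ν₀*α/2)))
      (by positivity) ?_
    · refine le_trans step ?_
      refine le_trans (mul_le_mul_right (lint_Ioc_rpow p s hp hs.le) _) ?_
      rw [← ENNReal.ofReal_mul (by positivity)]
      apply ENNReal.ofReal_le_ofReal
      have key : b ^ (-1-α) * s ^ (-(ν₀*α/2)) * (s ^ (p+1) / (p+1))
          = 1/(p+1) * (b ^ (-1-α) * s ^ (q+1)) := by
        rw [mul_assoc, ← mul_div_assoc, ← Real.rpow_add hs]
        have : -(ν₀*α/2) + (p+1) = q + 1 := by rw [hpdef, hqdef]; ring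
        rw [this]; ring
      rw [key]
      exact mul_le_mul_of_nonneg_left claimA (by positivity)
    · intro u hu
      have hu0 : 0 < u := hu.1
      have hus : u ≤ s := hu.2
      have f1 : min (s ^ (-1-α)) ((a+u) ^ (-1-α)) ≤ b ^ (-1-α) := by
        rcases le_total a s with hcase | hcase
        · rw [hbdef, max_eq_right hcase]
          exact min_le_left _ _
        · rw [hbdef, max_eq_left hcase]
          exact le_trans (min_le_right _ _)
            (Real.rpow_le_rpow_of_nonpos ha (by linarith) (by linarith))
      have f2 : (min 1 (u^(α/2) / s^(α/2)))^ν₀ = u ^ (ν₀*α/2) * s ^ (-(ν₀*α/2)) := by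
        have hle1 : u^(α/2) / s^(α/2) ≤ 1 := by
          rw [div_le_one (Real.rpow_pos_of_pos hs _)]
          exact Real.rpow_le_rpow hu0.le hus (by positivity)
        rw [min_eq_right hle1, Real.div_rpow (Real.rpow_nonneg hu0.le _)
          (Real.rpow_nonneg hs.le _), ← Real.rpow_mul hu0.le, ← Real.rpow_mul hs.le,
          show α/2*ν₀ = ν₀*α/2 from by ring, div_eq_mul_inv, ← Real.rpow_neg hs.le]
      rw [f2]
      have expand : min (s ^ (-1-α)) ((a+u) ^ (-1-α)) * (u ^ (ν₀*α/2) * s ^ (-(ν₀*α/2))) * u^q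
          ≤ b ^ (-1-α) * (u ^ (ν₀*α/2) * s ^ (-(ν₀*α/2))) * u^q := by
        apply mul_le_mul_of_nonneg_right (mul_le_mul_of_nonneg_right f1 (by positivity))
          (Real.rpow_nonneg hu0.le _)
      refine le_trans expand (le_of_eq ?_)
      rw [show b ^ (-1-α) * (u ^ (ν₀*α/2) * s ^ (-(ν₀*α/2))) * u^q
          = b ^ (-1-α) * s ^ (-(ν₀*α/2)) * (u ^ (ν₀*α/2) * u^q) by ring]
      rw [← Real.rpow_add hu0]
      congr 2
      rw [hpdef, hqdef]; ring
  -- common facts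
  have f1all : ∀ u : ℝ, 0 < u → min (s ^ (-1-α)) ((a+u) ^ (-1-α)) ≤ b ^ (-1-α) := by
    intro u hu0
    rcases le_total a s with hcase | hcase
    · rw [hbdef, max_eq_right hcase]
      exact min_le_left _ _
    · rw [hbdef, max_eq_left hcase]
      exact le_trans (min_le_right _ _)
        (Real.rpow_le_rpow_of_nonpos ha (by linarith) (by linarith))
  have hmin1 : ∀ u : ℝ, s ≤ u → 0 < u → (min 1 (u^(α/2) / s^(α/2)))^ν₀ = 1 := by
    intro u hsu hu0
    have : (1:ℝ) ≤ u^(α/2)/s^(α/2) := by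
      rw [le_div_iff₀ (Real.rpow_pos_of_pos hs _), one_mul]
      exact Real.rpow_le_rpow hs.le hsu (by positivity)
    rw [min_eq_left this, Real.one_rpow]
  -- Piece 2
  have P2 : ∫⁻ u in Ioc s b, ENNReal.ofReal
        (min (s ^ (-1-α)) ((a+u) ^ (-1-α)) * (min 1 (u^(α/2) / s^(α/2)))^ν₀ * u^q)
      ≤ ENNReal.ofReal (1/|q+1| * M) := by
    have step := lint_piece (S := Ioc s b) measurableSet_Ioc
      (fun u => min (s ^ (-1-α)) ((a+u) ^ (-1-α)) * (min 1 (u^(α/2) / s^(α/2)))^ν₀ * u^q)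
      (fun u => u ^ q) (b ^ (-1-α)) (Real.rpow_nonneg hb.le _) ?_
    · refine le_trans step ?_
      rcases (lt_or_gt_of_ne hq) with hcase | hcase
      · -- q < -1
        have tail : ∫⁻ u in Ioc s b, ENNReal.ofReal (u ^ q) ≤
            ENNReal.ofReal (s ^ (q+1) / (-(q+1))) := by
          refine le_trans (lintegral_mono' (Measure.restrict_mono
            (fun y hy => hy.1) le_rfl) le_rfl) ?_
          exact lint_Ioi_rpow q s hcase hs
        refine le_trans (mul_le_mul_right tail _) ?_
        rw [← ENNReal.ofReal_mul (Real.rpow_nonneg hb.le _)]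
        apply ENNReal.ofReal_le_ofReal
        have habs : |q+1| = -(q+1) := abs_of_neg (by linarith)
        rw [habs]
        calc b ^ (-1-α) * (s ^ (q+1) / (-(q+1)))
            = 1/(-(q+1)) * (b ^ (-1-α) * s ^ (q+1)) := by ring
          _ ≤ 1/(-(q+1)) * M :=
              mul_le_mul_of_nonneg_left claimA (le_of_lt (div_pos one_pos (by linarith)))
      · -- q > -1
        have tail : ∫⁻ u in Ioc s b, ENNReal.ofReal (u ^ q) ≤
            ENNReal.ofReal (b ^ (q+1) / (q+1)) := by
          refine le_trans (lintegral_mono' (Measure.restrict_mono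
            (fun y hy => mem_Ioc.2 ⟨lt_trans hs hy.1, hy.2⟩) le_rfl) le_rfl) ?_
          exact lint_Ioc_rpow q b hcase hb.le
        refine le_trans (mul_le_mul_right tail _) ?_
        rw [← ENNReal.ofReal_mul (Real.rpow_nonneg hb.le _)]
        apply ENNReal.ofReal_le_ofReal
        have habs : |q+1| = q+1 := abs_of_pos (by linarith)
        rw [habs]
        calc b ^ (-1-α) * (b ^ (q+1) / (q+1))
            = 1/(q+1) * (b ^ (-1-α) * b ^ (q+1)) := by ring
          _ = 1/(q+1) * b ^ (q - α) := by
              rw [← Real.rpow_add hb]; congr 2; ring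
          _ ≤ 1/(q+1) * M :=
              mul_le_mul_of_nonneg_left claimB (le_of_lt (div_pos one_pos (by linarith)))
    · intro u hu
      have hu0 : 0 < u := hs.trans hu.1
      rw [hmin1 u hu.1.le hu0]
      rw [mul_one]
      exact mul_le_mul_of_nonneg_right (f1all u hu0) (Real.rpow_nonneg hu0.le _)
  -- Piece 3
  have P3 : ∫⁻ u in Ioi b, ENNReal.ofReal
        (min (s ^ (-1-α)) ((a+u) ^ (-1-α)) * (min 1 (u^(α/2) / s^(α/2)))^ν₀ * u^q)
      ≤ ENNReal.ofReal (1/(α-q) * M) := by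
    have step := lint_piece (S := Ioi b) measurableSet_Ioi
      (fun u => min (s ^ (-1-α)) ((a+u) ^ (-1-α)) * (min 1 (u^(α/2) / s^(α/2)))^ν₀ * u^q)
      (fun u => u ^ (q - 1 - α)) 1 zero_le_one ?_
    · refine le_trans step ?_
      have tail : ∫⁻ u in Ioi b, ENNReal.ofReal (u ^ (q-1-α)) ≤
          ENNReal.ofReal (b ^ (q-1-α+1) / (-(q-1-α+1))) :=
        lint_Ioi_rpow (q-1-α) b (by linarith) hb
      refine le_trans (mul_le_mul_right tail _) ?_
      rw [ENNReal.ofReal_one, one_mul]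
      apply ENNReal.ofReal_le_ofReal
      have e1 : q - 1 - α + 1 = q - α := by ring
      rw [e1]
      calc b ^ (q-α) / (-(q-α)) = 1/(α-q) * b ^ (q-α) := by
            rw [show -(q-α) = α - q by ring]; ring
        _ ≤ 1/(α-q) * M :=
            mul_le_mul_of_nonneg_left claimB (le_of_lt (div_pos one_pos hαq))
    · intro u hu
      have hbu : b < u := hu
      have hu0 : 0 < u := hb.trans hbu
      rw [hmin1 u (le_of_lt (lt_of_le_of_lt hsb hbu)) hu0, mul_one, one_mul]
      calc min (s ^ (-1-α)) ((a+u) ^ (-1-α)) * u ^ q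
          ≤ (a+u) ^ (-1-α) * u ^ q :=
            mul_le_mul_of_nonneg_right (min_le_right _ _) (Real.rpow_nonneg hu0.le _)
        _ ≤ u ^ (-1-α) * u ^ q := by
            apply mul_le_mul_of_nonneg_right
              (Real.rpow_le_rpow_of_nonpos hu0 (by linarith) (by linarith))
              (Real.rpow_nonneg hu0.le _)
        _ = u ^ (q - 1 - α) := by
            rw [← Real.rpow_add hu0]; congr 1; ring
  refine le_trans (add_le_add P1 (add_le_add P2 P3)) ?_
  have n1 : 0 ≤ 1/(p+1) * M := le_of_lt (mul_pos (div_pos one_pos hp1) hM)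
  have n2 : 0 ≤ 1/|q+1| * M := le_of_lt (mul_pos (div_pos one_pos hq1) hM)
  have n3 : 0 ≤ 1/(α-q) * M := le_of_lt (mul_pos (div_pos one_pos hαq) hM)
  rw [← ENNReal.ofReal_add n2 n3, ← ENNReal.ofReal_add n1 (by linarith)]
  apply ENNReal.ofReal_le_ofReal
  apply le_of_eq
  ring

lemma coord_le_norm {n : ℕ} (w : EuclideanSpace ℝ (Fin n)) (i : Fin n) : |w i| ≤ ‖w‖ := by
  rw [EuclideanSpace.norm_eq, ← Real.sqrt_sq_eq_abs]
  apply Real.sqrt_le_sqrt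
  calc w i ^ 2 = ‖w i‖ ^ 2 := by rw [Real.norm_eq_abs, sq_abs]
    _ ≤ ∑ j, ‖w j‖ ^ 2 :=
      Finset.single_le_sum (f := fun j => ‖w j‖ ^ 2) (fun j _ => sq_nonneg _) (Finset.mem_univ i)

lemma min_rpow {X Y θ : ℝ} (hX : 0 ≤ X) (hY : 0 ≤ Y) (hθ : 0 ≤ θ) :
    min X Y ^ θ = min (X ^ θ) (Y ^ θ) := by
  rcases le_total X Y with h | h
  · rw [min_eq_left h, min_eq_left (Real.rpow_le_rpow hX h hθ)]
  · rw [min_eq_right h, min_eq_right (Real.rpow_le_rpow hY h hθ)]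

/-- Half-space auxiliary parabolic kernel estimate: for `d ≥ 1`, `α ∈ (0,2)`, and
`ν₀, ν₁ ∈ ℝ` with `ν₀ + ν₁ > -2/α`, `ν₁ < 2`, `ν₁ ≠ -2/α`, there is `C = C(d,α,ν₀,ν₁) > 0`
so that for all `t > 0` and `x` with `x¹ > 0`,
`∫_{z¹<0} (t^{-d/α-1} ∧ |x-z|^{-d-α}) (1 ∧ |z¹|^{α/2}/√t)^{ν₀} |z¹|^{ν₁α/2} dz
  ≤ C (t^{ν₁/2-1} ∧ ((x¹)^{ν₁α/2-α} ∨ t^{ν₁/2+1/α}(x¹)^{-1-α}))`. -/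
theorem stmt_1 (d : ℕ) (hd : 1 ≤ d) (α ν₀ ν₁ : ℝ) (hα : α ∈ Set.Ioo (0 : ℝ) 2)
    (h1 : ν₀ + ν₁ > -2 / α) (h2 : ν₁ < 2) (h3 : ν₁ ≠ -2 / α) :
    ∃ C : ℝ, 0 < C ∧ ∀ t : ℝ, 0 < t → ∀ x : EuclideanSpace ℝ (Fin d), 0 < x ⟨0, hd⟩ →
      ∫⁻ z in {z : EuclideanSpace ℝ (Fin d) | z ⟨0, hd⟩ < 0},
          ENNReal.ofReal
            (min (t ^ (-(d : ℝ) / α - 1)) (‖x - z‖ ^ (-(d : ℝ) - α)) *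
              (min 1 (|z ⟨0, hd⟩| ^ (α / 2) / Real.sqrt t)) ^ ν₀ *
              |z ⟨0, hd⟩| ^ (ν₁ * α / 2))
        ≤ ENNReal.ofReal
            (C * min (t ^ (ν₁ / 2 - 1))
              (max ((x ⟨0, hd⟩) ^ (ν₁ * α / 2 - α))
                (t ^ (ν₁ / 2 + 1 / α) * (x ⟨0, hd⟩) ^ (-1 - α)))) := by
  obtain ⟨hα0, hα2⟩ := hα
  obtain ⟨C1, hC1, hone⟩ := oneD α ν₀ ν₁ hα0 hα2 h1 h2 h3
  obtain ⟨m, rfl⟩ : ∃ m, d = m + 1 := ⟨d - 1, (Nat.succ_pred_eq_of_pos hd).symm⟩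
  have hi0 : (⟨0, hd⟩ : Fin (m+1)) = 0 := rfl
  set e : ℝ := ((m:ℝ) + 1) + α with hedef
  have hme : (m:ℝ) < e := by rw [hedef]; linarith
  have he : 0 < e := by rw [hedef]; positivity
  have hem : e - m = 1 + α := by rw [hedef]; ring
  set Cm : ℝ := 2^m * (e/(e-(m:ℝ))) with hCmdef
  have hCm : 0 < Cm := mul_pos (by positivity) (div_pos he (by linarith))
  refine ⟨Cm * C1, mul_pos hCm hC1, ?_⟩
  intro t ht x hx
  set s : ℝ := t ^ (1/α) with hsdef
  have hs : 0 < s := Real.rpow_pos_of_pos ht _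
  set x0 : ℝ := x ⟨0, hd⟩ with hx0def
  -- the transfer map
  set P := MeasurableEquiv.piFinSuccAbove (fun _ : Fin (m+1) => ℝ) 0 with hPdef
  set E := (MeasurableEquiv.toLp 2 (Fin (m+1) → ℝ)).symm with hEdef
  set Φ : ℝ × (Fin m → ℝ) → EuclideanSpace ℝ (Fin (m+1)) :=
    (fun y => E.symm y) ∘ (fun w => P.symm w) with hΦdef
  have hΦmp : MeasurePreserving Φ volume volume :=
    ((EuclideanSpace.volume_preserving_symm_measurableEquiv_toLp (Fin (m+1))).symm E).comp
      ((volume_preserving_piFinSuccAbove (fun _ : Fin (m+1) => ℝ) 0).symm P)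
  have hΦemb : MeasurableEmbedding Φ :=
    E.symm.measurableEmbedding.comp P.symm.measurableEmbedding
  -- coordinates of Φ
  have hcoord0 : ∀ w : ℝ × (Fin m → ℝ), (Φ w) ⟨0, hd⟩ = w.1 := by
    intro w
    show ((Fin.insertNthEquiv (fun _ : Fin (m+1) => ℝ) 0) w) ⟨0, hd⟩ = w.1
    rw [hi0]
    simp
  have hcoordS : ∀ (w : ℝ × (Fin m → ℝ)) (j : Fin m),
      (Φ w) ((0 : Fin (m+1)).succAbove j) = w.2 j := by
    intro w j
    show ((Fin.insertNthEquiv (fun _ : Fin (m+1) => ℝ) 0) w) ((0 : Fin (m+1)).succAbove j)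
      = w.2 j
    simp
  rw [← MeasurePreserving.setLIntegral_comp_preimage_emb hΦmp hΦemb _
    {z : EuclideanSpace ℝ (Fin (m+1)) | z ⟨0, hd⟩ < 0}]
  have hpre : Φ ⁻¹' {z : EuclideanSpace ℝ (Fin (m+1)) | z ⟨0, hd⟩ < 0}
      = (Iio (0:ℝ)) ×ˢ (univ : Set (Fin m → ℝ)) := by
    ext w
    simp only [mem_preimage, mem_setOf_eq, hcoord0 w, mem_prod, mem_Iio, mem_univ, and_true]
  rw [hpre]
  rw [show (volume : Measure (ℝ × (Fin m → ℝ))) = (volume.prod volume) from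
    (Measure.volume_eq_prod _ _), ← Measure.prod_restrict, Measure.restrict_univ]
  simp only [hcoord0]
  have hrpow : ∀ c : ℝ, Measurable fun y : ℝ => y ^ c := fun c => by fun_prop
  have hΦmeas : Measurable Φ := hΦemb.measurable
  have hbig : Measurable fun w : ℝ × (Fin m → ℝ) =>
      ENNReal.ofReal
        (min (t ^ (-((m+1:ℕ):ℝ) / α - 1)) (‖x - Φ w‖ ^ (-((m+1:ℕ):ℝ) - α)) *
          (min 1 (|w.1| ^ (α / 2) / Real.sqrt t)) ^ ν₀ *
          |w.1| ^ (ν₁ * α / 2)) :=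
    ENNReal.measurable_ofReal.comp
      (((measurable_const.min
          ((hrpow _).comp ((measurable_const.sub hΦmeas).norm))).mul
        ((hrpow ν₀).comp (measurable_const.min
          (((hrpow (α/2)).comp measurable_fst.abs).div_const _)))).mul
        ((hrpow (ν₁*α/2)).comp measurable_fst.abs))
  rw [lintegral_prod _ hbig.aemeasurable]
  have hT : (0:ℝ) < t ^ (-((m+1:ℕ):ℝ)/α - 1) := Real.rpow_pos_of_pos ht _
  have hce : -((m+1:ℕ):ℝ) - α = -e := by rw [hedef]; push_cast; ring
  have hθ : 1 - (m:ℝ)/e = (1+α)/e := by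
    rw [← hem]; field_simp
  have hθpos : (0:ℝ) ≤ 1 - (m:ℝ)/e := by
    rw [hθ]; positivity
  have hsqrt : Real.sqrt t = s ^ (α/2) := by
    rw [Real.sqrt_eq_rpow, hsdef, ← Real.rpow_mul ht.le]
    congr 1
    field_simp
  -- pointwise-in-a inner estimate
  have key : ∀ a : ℝ, a < 0 →
      (∫⁻ v, ENNReal.ofReal
        (min (t ^ (-((m+1:ℕ):ℝ)/α - 1)) (‖x - Φ (a, v)‖ ^ (-((m+1:ℕ):ℝ) - α)) *
          (min 1 (|a| ^ (α/2) / Real.sqrt t)) ^ ν₀ * |a| ^ (ν₁*α/2)))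
      ≤ ENNReal.ofReal ((min 1 (|a| ^ (α/2) / Real.sqrt t)) ^ ν₀ * |a| ^ (ν₁*α/2) *
          (Cm * min (s ^ (-1-α)) ((x0 - a) ^ (-1-α)))) := by
    intro a ha
    have hr : 0 < x0 - a := by linarith
    have hψ : 0 ≤ (min 1 (|a| ^ (α/2) / Real.sqrt t)) ^ ν₀ * |a| ^ (ν₁*α/2) := by
      apply mul_nonneg _ (Real.rpow_nonneg (abs_nonneg a) _)
      apply Real.rpow_nonneg
      exact le_min zero_le_one (by positivity)
    have hnorm_ge : ∀ v : Fin m → ℝ, x0 - a ≤ ‖x - Φ (a, v)‖ := by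
      intro v
      calc x0 - a = (x - Φ (a, v)) ⟨0, hd⟩ := by
            rw [PiLp.sub_apply, hcoord0 (a, v)]
        _ ≤ |(x - Φ (a, v)) ⟨0, hd⟩| := le_abs_self _
        _ ≤ ‖x - Φ (a, v)‖ := coord_le_norm _ _
    have habs : ∀ (v : Fin m → ℝ) (j : Fin m),
        |v j - x ((0 : Fin (m+1)).succAbove j)| ≤ ‖x - Φ (a, v)‖ := by
      intro v j
      calc |v j - x ((0 : Fin (m+1)).succAbove j)|
          = |(x - Φ (a, v)) ((0 : Fin (m+1)).succAbove j)| := by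
            rw [PiLp.sub_apply, hcoordS (a, v) j, abs_sub_comm]
        _ ≤ ‖x - Φ (a, v)‖ := coord_le_norm _ _
    have inner_bound := inner_est m e hme (t ^ (-((m+1:ℕ):ℝ)/α - 1)) (x0 - a) hT hr
      (fun j => x ((0 : Fin (m+1)).succAbove j))
      (fun v => min (t ^ (-((m+1:ℕ):ℝ)/α - 1)) (‖x - Φ (a, v)‖ ^ (-((m+1:ℕ):ℝ) - α)))
      (measurable_const.min ((hrpow _).comp
        ((measurable_const.sub (hΦmeas.comp measurable_prodMk_left)).norm)))
      (fun v => le_min hT.le (Real.rpow_nonneg (norm_nonneg _) _))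
      (fun v => le_min (min_le_left _ _) (le_trans (min_le_right _ _) (by
        rw [hce]
        exact Real.rpow_le_rpow_of_nonpos hr (hnorm_ge v) (by linarith))))
      (fun v j => le_trans (min_le_right _ _) (by
        rw [hce]
        exact Real.rpow_le_rpow_of_nonpos (lt_of_lt_of_le hr (le_max_left _ _))
          (max_le (hnorm_ge v) (habs v j)) (by linarith)))
    have hmin_eq : (min (t ^ (-((m+1:ℕ):ℝ)/α - 1)) ((x0 - a) ^ (-e))) ^ (1 - (m:ℝ)/e)
        = min (s ^ (-1-α)) ((x0 - a) ^ (-1-α)) := by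
      rw [min_rpow hT.le (Real.rpow_nonneg hr.le _) hθpos]
      congr 1
      · have hTeq : t ^ (-((m+1:ℕ):ℝ)/α - 1) = t ^ (-e/α) := by
          congr 1
          rw [hedef]; push_cast; field_simp; ring
        rw [hTeq, ← Real.rpow_mul ht.le, hsdef, ← Real.rpow_mul ht.le]
        congr 1
        rw [hθ]
        field_simp
        ring
      · rw [← Real.rpow_mul hr.le]
        congr 1
        rw [hθ]
        field_simp
        ring
    calc ∫⁻ v, ENNReal.ofReal
          (min (t ^ (-((m+1:ℕ):ℝ)/α - 1)) (‖x - Φ (a, v)‖ ^ (-((m+1:ℕ):ℝ) - α)) *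
            (min 1 (|a| ^ (α/2) / Real.sqrt t)) ^ ν₀ * |a| ^ (ν₁*α/2))
        = ∫⁻ v, ENNReal.ofReal ((min 1 (|a| ^ (α/2) / Real.sqrt t)) ^ ν₀ * |a| ^ (ν₁*α/2)) *
            ENNReal.ofReal
              (min (t ^ (-((m+1:ℕ):ℝ)/α - 1)) (‖x - Φ (a, v)‖ ^ (-((m+1:ℕ):ℝ) - α))) := by
          apply lintegral_congr
          intro v
          rw [← ENNReal.ofReal_mul hψ]
          congr 1
          ring
      _ = ENNReal.ofReal ((min 1 (|a| ^ (α/2) / Real.sqrt t)) ^ ν₀ * |a| ^ (ν₁*α/2)) *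
            ∫⁻ v, ENNReal.ofReal
              (min (t ^ (-((m+1:ℕ):ℝ)/α - 1)) (‖x - Φ (a, v)‖ ^ (-((m+1:ℕ):ℝ) - α))) :=
          lintegral_const_mul' _ _ ENNReal.ofReal_ne_top
      _ ≤ ENNReal.ofReal ((min 1 (|a| ^ (α/2) / Real.sqrt t)) ^ ν₀ * |a| ^ (ν₁*α/2)) *
            ENNReal.ofReal (Cm * min (s ^ (-1-α)) ((x0 - a) ^ (-1-α))) := by
          apply mul_le_mul_right
          refine le_trans inner_bound (le_of_eq ?_)
          rw [hCmdef, hmin_eq]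
      _ = ENNReal.ofReal ((min 1 (|a| ^ (α/2) / Real.sqrt t)) ^ ν₀ * |a| ^ (ν₁*α/2) *
            (Cm * min (s ^ (-1-α)) ((x0 - a) ^ (-1-α)))) := (ENNReal.ofReal_mul hψ).symm
  calc ∫⁻ a in Iio (0:ℝ), ∫⁻ v, ENNReal.ofReal
        (min (t ^ (-((m+1:ℕ):ℝ)/α - 1)) (‖x - Φ (a, v)‖ ^ (-((m+1:ℕ):ℝ) - α)) *
          (min 1 (|a| ^ (α/2) / Real.sqrt t)) ^ ν₀ * |a| ^ (ν₁*α/2))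
      ≤ ∫⁻ a in Iio (0:ℝ), ENNReal.ofReal
          ((min 1 (|a| ^ (α/2) / Real.sqrt t)) ^ ν₀ * |a| ^ (ν₁*α/2) *
            (Cm * min (s ^ (-1-α)) ((x0 - a) ^ (-1-α)))) := by
        apply lintegral_mono_ae
        filter_upwards [ae_restrict_mem measurableSet_Iio] with a ha
        exact key a ha
    _ = ∫⁻ u in Ioi (0:ℝ), ENNReal.ofReal
          ((min 1 (|(-u)| ^ (α/2) / Real.sqrt t)) ^ ν₀ * |(-u)| ^ (ν₁*α/2) *
            (Cm * min (s ^ (-1-α)) ((x0 - (-u)) ^ (-1-α)))) := by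
        rw [← MeasurePreserving.setLIntegral_comp_preimage_emb
            (Measure.measurePreserving_neg volume) (Homeomorph.neg ℝ).measurableEmbedding
            (fun a => ENNReal.ofReal
              ((min 1 (|a| ^ (α/2) / Real.sqrt t)) ^ ν₀ * |a| ^ (ν₁*α/2) *
                (Cm * min (s ^ (-1-α)) ((x0 - a) ^ (-1-α))))) (Iio 0),
          show (Neg.neg ⁻¹' (Iio (0:ℝ))) = Ioi 0 from by ext u; simp]
    _ = ENNReal.ofReal Cm * ∫⁻ u in Ioi (0:ℝ), ENNReal.ofReal
          (min (s ^ (-1-α)) ((x0 + u) ^ (-1-α)) *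
            (min 1 (u ^ (α/2) / s ^ (α/2))) ^ ν₀ * u ^ (ν₁*α/2)) := by
        rw [← lintegral_const_mul' _ _ ENNReal.ofReal_ne_top]
        apply lintegral_congr_ae
        filter_upwards [ae_restrict_mem measurableSet_Ioi] with u hu
        have hu0 : (0:ℝ) < u := hu
        rw [← ENNReal.ofReal_mul hCm.le]
        congr 1
        rw [abs_neg, abs_of_pos hu0, sub_neg_eq_add, hsqrt]
        ring
    _ ≤ ENNReal.ofReal Cm * ENNReal.ofReal (C1 * min (s ^ (ν₁*α/2 - α))
          (max (x0 ^ (ν₁*α/2 - α)) (s ^ (ν₁*α/2 + 1) * x0 ^ (-1-α)))) :=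
        mul_le_mul_right (hone s x0 hs hx) _
    _ ≤ ENNReal.ofReal (Cm * C1 * min (t ^ (ν₁ / 2 - 1))
          (max (x0 ^ (ν₁ * α / 2 - α)) (t ^ (ν₁ / 2 + 1 / α) * x0 ^ (-1 - α)))) := by
        rw [← ENNReal.ofReal_mul hCm.le]
        apply ENNReal.ofReal_le_ofReal
        apply le_of_eq
        have e1 : s ^ (ν₁*α/2 - α) = t ^ (ν₁ / 2 - 1) := by
          rw [hsdef, ← Real.rpow_mul ht.le,
            show 1/α * (ν₁*α/2 - α) = ν₁/2 - 1 from by field_simp [hα0.ne']]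
        have e2 : s ^ (ν₁*α/2 + 1) = t ^ (ν₁ / 2 + 1 / α) := by
          rw [hsdef, ← Real.rpow_mul ht.le,
            show 1/α * (ν₁*α/2 + 1) = ν₁/2 + 1/α from by field_simp [hα0.ne']]
        rw [e1, e2]
        exact (mul_assoc _ _ _).symm
end

section
/- Let α ∈ (0,2) and ν₀, ν₁ ∈ ℝ satisfy ν₀ + ν₁ > -2/α, ν₁ < 2, and ν₁ ≠ -2/α. Then there exists a constant C = C(α,ν₀,ν₁) > 0 such that for every x > 0, ∫_{-∞}^0 min(1, |x-z|^{-1-α}) · min(1, |z|^{α/2})^{ν₀} · |z|^{ν₁α/2} dz ≤ C · min( 1, max( x^{ν₁α/2-α}, x^{-1-α} ) ). -/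
open MeasureTheory ENNReal

private lemma lint_Ioo_rpow {p a : ℝ} (hp : -1 < p) (ha : 0 < a) :
    ∫⁻ y in Set.Ioo (0:ℝ) a, ENNReal.ofReal (y ^ p) = ENNReal.ofReal (a ^ (p+1) / (p+1)) := by
  have hint : IntegrableOn (fun y : ℝ => y ^ p) (Set.Ioo 0 a) := by
    have h := intervalIntegral.intervalIntegrable_rpow' hp (a := 0) (b := a)
    rw [intervalIntegrable_iff_integrableOn_Ioc_of_le ha.le] at h
    exact h.mono_set Set.Ioo_subset_Ioc_self
  have hnn : 0 ≤ᵐ[volume.restrict (Set.Ioo (0:ℝ) a)] fun y : ℝ => y ^ p := by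
    filter_upwards [ae_restrict_mem measurableSet_Ioo] with y hy
    exact Real.rpow_nonneg hy.1.le p
  rw [← ofReal_integral_eq_lintegral_ofReal hint hnn]
  congr 1
  rw [← integral_Ioc_eq_integral_Ioo, ← intervalIntegral.integral_of_le ha.le,
    integral_rpow (Or.inl hp), Real.zero_rpow (by linarith)]
  ring

private lemma lint_Ici_rpow {q a : ℝ} (hq : q < -1) (ha : 0 < a) :
    ∫⁻ y in Set.Ici a, ENNReal.ofReal (y ^ q) = ENNReal.ofReal (a ^ (q+1) / (-(q+1))) := by
  rw [← Measure.restrict_congr_set Ioi_ae_eq_Ici]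
  have hint := integrableOn_Ioi_rpow_of_lt hq ha
  have hnn : 0 ≤ᵐ[volume.restrict (Set.Ioi a)] fun y : ℝ => y ^ q := by
    filter_upwards [ae_restrict_mem measurableSet_Ioi] with y hy
    exact Real.rpow_nonneg (ha.trans hy).le q
  rw [← ofReal_integral_eq_lintegral_ofReal hint hnn, integral_Ioi_rpow_of_lt hq ha]
  congr 1
  rw [div_neg, neg_div]

/-- One-dimensional auxiliary kernel estimate (case `d = 1`, `t = 1`): for `α ∈ (0,2)` and
`ν₀, ν₁ ∈ ℝ` with `ν₀ + ν₁ > -2/α`, `ν₁ < 2`, `ν₁ ≠ -2/α`, there is `C = C(α,ν₀,ν₁) > 0`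
such that for every `x > 0`,
`∫_{-∞}^0 (1 ∧ |x-z|^{-1-α}) (1 ∧ |z|^{α/2})^{ν₀} |z|^{ν₁α/2} dz
  ≤ C (1 ∧ (x^{ν₁α/2-α} ∨ x^{-1-α}))`. -/
theorem stmt_2 (α ν₀ ν₁ : ℝ) (hα : α ∈ Set.Ioo (0 : ℝ) 2)
    (h1 : ν₀ + ν₁ > -2 / α) (h2 : ν₁ < 2) (h3 : ν₁ ≠ -2 / α) :
    ∃ C : ℝ, 0 < C ∧ ∀ x : ℝ, 0 < x →
      ∫⁻ z in Set.Iio (0 : ℝ),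
          ENNReal.ofReal
            (min 1 (|x - z| ^ (-1 - α)) * (min 1 (|z| ^ (α / 2))) ^ ν₀ * |z| ^ (ν₁ * α / 2))
        ≤ ENNReal.ofReal (C * min 1 (max (x ^ (ν₁ * α / 2 - α)) (x ^ (-1 - α)))) := by
  obtain ⟨hα0, hα2⟩ := hα
  have hαne : α ≠ 0 := ne_of_gt hα0
  have hs : -1 < ν₀ * α / 2 + ν₁ * α / 2 := by
    have h := (div_lt_iff₀ hα0).mp h1
    nlinarith
  have hb_lt : ν₁ * α / 2 < α := by nlinarith
  have hb_ne : ν₁ * α / 2 ≠ -1 := by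
    intro h
    apply h3
    field_simp
    linarith
  set b := ν₁ * α / 2 with hbdef
  set s := ν₀ * α / 2 + b with hsdef
  have hs1 : (0:ℝ) < s + 1 := by linarith
  have hab : (0:ℝ) < α - b := by linarith
  have habs : (0:ℝ) < |b + 1| := abs_pos.mpr (fun h => hb_ne (by linarith))
  set c1 : ℝ := 1 / (s + 1) with hc1def
  set c2 : ℝ := 1 / (α - b) with hc2def
  set K2 : ℝ := 1 / |b + 1| with hK2def
  have hc1 : 0 < c1 := by positivity
  have hc2 : 0 < c2 := by positivity
  have hK2 : 0 < K2 := by positivity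
  set K : ℝ := c1 + K2 + c2 with hKdef
  have hK : 0 < K := by positivity
  have hq : b - 1 - α < -1 := by linarith
  refine ⟨c1 + c2 + 2 * K, by positivity, ?_⟩
  intro x hx
  -- flip the integral to the positive half-line
  have hflip : (∫⁻ z in Set.Iio (0 : ℝ),
          ENNReal.ofReal
            (min 1 (|x - z| ^ (-1 - α)) * (min 1 (|z| ^ (α / 2))) ^ ν₀ * |z| ^ b))
      = ∫⁻ y in Set.Ioi (0 : ℝ),
          ENNReal.ofReal
            (min 1 ((x + y) ^ (-1 - α)) * (min 1 (y ^ (α / 2))) ^ ν₀ * y ^ b) := by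
    have hpre : ((fun y : ℝ => -y) ⁻¹' (Set.Iio (0:ℝ))) = Set.Ioi 0 := by
      ext z; simp
    have hemb : MeasurableEmbedding (fun y : ℝ => -y) :=
      (MeasurableEquiv.neg ℝ).measurableEmbedding
    have h := (Measure.measurePreserving_neg (volume : Measure ℝ)).setLIntegral_comp_preimage_emb
      hemb (fun z => ENNReal.ofReal
        (min 1 (|x - z| ^ (-1 - α)) * (min 1 (|z| ^ (α / 2))) ^ ν₀ * |z| ^ b)) (Set.Iio 0)
    rw [hpre] at h
    rw [← h]
    refine setLIntegral_congr_fun measurableSet_Ioi (fun y hy => ?_)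
    have hy0 : (0:ℝ) < y := hy
    rw [sub_neg_eq_add, abs_neg, abs_of_pos hy0, abs_of_pos (by linarith)]
  rw [hflip]
  -- pointwise estimates
  have E1 : ∀ y : ℝ, 0 < y → y < 1 →
      min 1 ((x + y) ^ (-1 - α)) * (min 1 (y ^ (α / 2))) ^ ν₀ * y ^ b
        ≤ min 1 ((x + y) ^ (-1 - α)) * y ^ s := by
    intro y hy0 hy1
    have h : (min 1 (y ^ (α / 2))) ^ ν₀ * y ^ b = y ^ s := by
      rw [min_eq_right (Real.rpow_le_one hy0.le hy1.le (by linarith)),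
        ← Real.rpow_mul hy0.le, ← Real.rpow_add hy0]
      congr 1
      rw [hsdef, hbdef]; ring
    rw [mul_assoc, h]
  have E2 : ∀ y : ℝ, 1 ≤ y →
      min 1 ((x + y) ^ (-1 - α)) * (min 1 (y ^ (α / 2))) ^ ν₀ * y ^ b
        ≤ y ^ (b - 1 - α) := by
    intro y hy1
    have hy0 : (0:ℝ) < y := lt_of_lt_of_le one_pos hy1
    rw [min_eq_left (Real.one_le_rpow hy1 (by linarith)), Real.one_rpow, mul_one]
    calc min 1 ((x + y) ^ (-1 - α)) * y ^ b
        ≤ (x + y) ^ (-1 - α) * y ^ b :=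
          mul_le_mul_of_nonneg_right (min_le_right _ _) (Real.rpow_nonneg hy0.le _)
      _ ≤ y ^ (-1 - α) * y ^ b :=
          mul_le_mul_of_nonneg_right
            (Real.rpow_le_rpow_of_nonpos hy0 (by linarith) (by linarith))
            (Real.rpow_nonneg hy0.le _)
      _ = y ^ (b - 1 - α) := by rw [← Real.rpow_add hy0]; congr 1; ring
  have E3 : ∀ y : ℝ, 0 < y → min 1 ((x + y) ^ (-1 - α)) ≤ x ^ (-1 - α) :=
    fun y hy0 => (min_le_right _ _).trans
      (Real.rpow_le_rpow_of_nonpos hx (by linarith) (by linarith))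
  -- integral bound on (0,1)
  have hIoo01 : ∀ c : ℝ, 0 ≤ c → (∀ y ∈ Set.Ioo (0:ℝ) 1, min 1 ((x + y) ^ (-1 - α)) ≤ c) →
      (∫⁻ y in Set.Ioo (0:ℝ) 1, ENNReal.ofReal
          (min 1 ((x + y) ^ (-1 - α)) * (min 1 (y ^ (α / 2))) ^ ν₀ * y ^ b))
        ≤ ENNReal.ofReal (c * c1) := by
    intro c hc hbound
    calc ∫⁻ y in Set.Ioo (0:ℝ) 1, ENNReal.ofReal
            (min 1 ((x + y) ^ (-1 - α)) * (min 1 (y ^ (α / 2))) ^ ν₀ * y ^ b)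
        ≤ ∫⁻ y in Set.Ioo (0:ℝ) 1, ENNReal.ofReal (c * y ^ s) := by
          refine setLIntegral_mono' measurableSet_Ioo fun y hy => ENNReal.ofReal_le_ofReal ?_
          exact (E1 y hy.1 hy.2).trans
            (mul_le_mul_of_nonneg_right (hbound y hy) (Real.rpow_nonneg hy.1.le _))
      _ = ENNReal.ofReal c * ∫⁻ y in Set.Ioo (0:ℝ) 1, ENNReal.ofReal (y ^ s) := by
          simp_rw [ENNReal.ofReal_mul hc]
          rw [lintegral_const_mul' _ _ ofReal_ne_top]
      _ = ENNReal.ofReal c * ENNReal.ofReal c1 := by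
          rw [lint_Ioo_rpow hs one_pos, Real.one_rpow, hc1def]
      _ = ENNReal.ofReal (c * c1) := (ENNReal.ofReal_mul hc).symm
    -- integral bound on [a,∞) for a ≥ 1
  have hIci : ∀ a0 : ℝ, 1 ≤ a0 →
      (∫⁻ y in Set.Ici a0, ENNReal.ofReal
          (min 1 ((x + y) ^ (-1 - α)) * (min 1 (y ^ (α / 2))) ^ ν₀ * y ^ b))
        ≤ ENNReal.ofReal (a0 ^ (b - α) * c2) := by
    intro a0 ha0
    have ha00 : (0:ℝ) < a0 := lt_of_lt_of_le one_pos ha0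
    calc (∫⁻ y in Set.Ici a0, ENNReal.ofReal
          (min 1 ((x + y) ^ (-1 - α)) * (min 1 (y ^ (α / 2))) ^ ν₀ * y ^ b))
        ≤ ∫⁻ y in Set.Ici a0, ENNReal.ofReal (y ^ (b - 1 - α)) :=
          setLIntegral_mono' measurableSet_Ici fun y hy =>
            ENNReal.ofReal_le_ofReal (E2 y (ha0.trans hy))
      _ = ENNReal.ofReal (a0 ^ (b - 1 - α + 1) / (-(b - 1 - α + 1))) := lint_Ici_rpow hq ha00
      _ = ENNReal.ofReal (a0 ^ (b - α) * c2) := by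
          rw [show b - 1 - α + 1 = b - α by ring, show -(b - α) = α - b by ring, hc2def,
            div_eq_mul_one_div]
  rcases le_or_gt x 1 with hx1 | hx1
  · -- small x
    have hsplit : Set.Ioo (0:ℝ) 1 ∪ Set.Ici 1 = Set.Ioi 0 := Set.Ioo_union_Ici_eq_Ioi one_pos
    have hdisj : Disjoint (Set.Ioo (0:ℝ) 1) (Set.Ici 1) :=
      Set.disjoint_left.mpr fun y hy hy' => absurd hy' (not_le.mpr hy.2)
    rw [← hsplit, lintegral_union measurableSet_Ici hdisj]
    have hA := hIoo01 1 zero_le_one fun y _ => min_le_left _ _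
    have hB := hIci 1 le_rfl
    refine le_trans (add_le_add hA hB) ?_
    rw [← ENNReal.ofReal_add (by positivity) (by positivity)]
    refine ENNReal.ofReal_le_ofReal ?_
    have hmax : (1:ℝ) ≤ max (x ^ (b - α)) (x ^ (-1 - α)) :=
      le_trans (Real.one_le_rpow_of_pos_of_le_one_of_nonpos hx hx1 (by linarith))
        (le_max_right _ _)
    rw [min_eq_left hmax]
    simp only [Real.one_rpow, one_mul, mul_one]
    linarith [hK]
  · -- large x
    have hx1' : (1:ℝ) ≤ x := hx1.le
    have hsplit2 : Set.Ioo (0:ℝ) 1 ∪ Set.Ico 1 x = Set.Ioo 0 x :=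
      Set.Ioo_union_Ico_eq_Ioo one_pos hx1'
    have hsplit1 : Set.Ioo (0:ℝ) x ∪ Set.Ici x = Set.Ioi 0 := Set.Ioo_union_Ici_eq_Ioi hx
    have hdisj1 : Disjoint (Set.Ioo (0:ℝ) x) (Set.Ici x) :=
      Set.disjoint_left.mpr fun y hy hy' => absurd hy' (not_le.mpr hy.2)
    have hdisj2 : Disjoint (Set.Ioo (0:ℝ) 1) (Set.Ico 1 x) :=
      Set.disjoint_left.mpr fun y hy hy' => absurd hy'.1 (not_le.mpr hy.2)
    rw [← hsplit1, lintegral_union measurableSet_Ici hdisj1, ← hsplit2,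
      lintegral_union measurableSet_Ico hdisj2]
    have hX1 : (0:ℝ) ≤ x ^ (-1 - α) := Real.rpow_nonneg hx.le _
    have hxx : x ^ (-1 - α) * x ^ (b + 1) = x ^ (b - α) := by
      rw [← Real.rpow_add hx]; congr 1; ring
    have hA := hIoo01 (x ^ (-1 - α)) hX1 fun y hy => E3 y hy.1
    have hIcoB : (∫⁻ y in Set.Ico (1:ℝ) x, ENNReal.ofReal (y ^ b))
        ≤ ENNReal.ofReal K2 + ENNReal.ofReal (K2 * x ^ (b + 1)) := by
      rcases lt_or_gt_of_ne hb_ne with hblt | hbgt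
      · refine le_trans (lintegral_mono_set Set.Ico_subset_Ici_self) ?_
        rw [lint_Ici_rpow hblt one_pos, Real.one_rpow]
        refine le_trans (le_of_eq ?_) le_self_add
        rw [hK2def, abs_of_neg (show b + 1 < 0 by linarith)]
      · refine le_trans (lintegral_mono_set
          (show Set.Ico (1:ℝ) x ⊆ Set.Ioo 0 x from
            fun y hy => ⟨lt_of_lt_of_le one_pos hy.1, hy.2⟩)) ?_
        rw [lint_Ioo_rpow hbgt hx]
        refine le_trans (le_of_eq ?_) le_add_self
        rw [hK2def, abs_of_pos (show (0:ℝ) < b + 1 by linarith), div_eq_mul_one_div,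
          mul_comm]
    have hB : (∫⁻ y in Set.Ico (1:ℝ) x, ENNReal.ofReal
          (min 1 ((x + y) ^ (-1 - α)) * (min 1 (y ^ (α / 2))) ^ ν₀ * y ^ b))
        ≤ ENNReal.ofReal (x ^ (-1 - α) * K2 + x ^ (-1 - α) * (K2 * x ^ (b + 1))) := by
      calc (∫⁻ y in Set.Ico (1:ℝ) x, ENNReal.ofReal
            (min 1 ((x + y) ^ (-1 - α)) * (min 1 (y ^ (α / 2))) ^ ν₀ * y ^ b))
          ≤ ∫⁻ y in Set.Ico (1:ℝ) x, ENNReal.ofReal (x ^ (-1 - α) * y ^ b) := by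
            refine setLIntegral_mono' measurableSet_Ico fun y hy =>
              ENNReal.ofReal_le_ofReal ?_
            have hy0 : (0:ℝ) < y := lt_of_lt_of_le one_pos hy.1
            rw [min_eq_left (Real.one_le_rpow hy.1 (by linarith)), Real.one_rpow, mul_one]
            exact mul_le_mul_of_nonneg_right (E3 y hy0) (Real.rpow_nonneg hy0.le _)
        _ = ENNReal.ofReal (x ^ (-1 - α)) * ∫⁻ y in Set.Ico (1:ℝ) x,
              ENNReal.ofReal (y ^ b) := by
            simp_rw [ENNReal.ofReal_mul hX1]
            rw [lintegral_const_mul' _ _ ofReal_ne_top]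
        _ ≤ ENNReal.ofReal (x ^ (-1 - α)) *
              (ENNReal.ofReal K2 + ENNReal.ofReal (K2 * x ^ (b + 1))) :=
            mul_le_mul_right hIcoB _
        _ = ENNReal.ofReal (x ^ (-1 - α) * K2 + x ^ (-1 - α) * (K2 * x ^ (b + 1))) := by
            rw [mul_add, ← ENNReal.ofReal_mul hX1, ← ENNReal.ofReal_mul hX1,
              ← ENNReal.ofReal_add (mul_nonneg hX1 hK2.le)
                (mul_nonneg hX1 (mul_nonneg hK2.le (Real.rpow_nonneg hx.le _)))]
    have hC := hIci x hx1'
    refine le_trans (add_le_add (add_le_add hA hB) hC) ?_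
    rw [← ENNReal.ofReal_add (mul_nonneg hX1 hc1.le)
        (add_nonneg (mul_nonneg hX1 hK2.le)
          (mul_nonneg hX1 (mul_nonneg hK2.le (Real.rpow_nonneg hx.le _)))),
      ← ENNReal.ofReal_add (by positivity) (mul_nonneg (Real.rpow_nonneg hx.le _) hc2.le)]
    · refine ENNReal.ofReal_le_ofReal ?_
      have hm1 : x ^ (b - α) ≤ 1 :=
        Real.rpow_le_one_of_one_le_of_nonpos hx1' (by linarith)
      have hm2 : x ^ (-1 - α) ≤ 1 :=
        Real.rpow_le_one_of_one_le_of_nonpos hx1' (by linarith)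
      rw [min_eq_right (max_le hm1 hm2),
        show x ^ (-1 - α) * (K2 * x ^ (b + 1)) = K2 * x ^ (b - α) by rw [← hxx]; ring]
      have hM1 : x ^ (b - α) ≤ max (x ^ (b - α)) (x ^ (-1 - α)) := le_max_left _ _
      have hM2 : x ^ (-1 - α) ≤ max (x ^ (b - α)) (x ^ (-1 - α)) := le_max_right _ _
      have hM0 : (0:ℝ) ≤ max (x ^ (b - α)) (x ^ (-1 - α)) :=
        le_trans (Real.rpow_nonneg hx.le _) hM1
      calc x ^ (-1 - α) * c1 + (x ^ (-1 - α) * K2 + K2 * x ^ (b - α)) + x ^ (b - α) * c2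
          ≤ max (x ^ (b - α)) (x ^ (-1 - α)) * c1 +
              (max (x ^ (b - α)) (x ^ (-1 - α)) * K2 +
                K2 * max (x ^ (b - α)) (x ^ (-1 - α))) +
              max (x ^ (b - α)) (x ^ (-1 - α)) * c2 :=
            add_le_add (add_le_add (mul_le_mul_of_nonneg_right hM2 hc1.le)
              (add_le_add (mul_le_mul_of_nonneg_right hM2 hK2.le)
                (mul_le_mul_of_nonneg_left hM1 hK2.le)))
              (mul_le_mul_of_nonneg_right hM1 hc2.le)
        _ = (c1 + 2 * K2 + c2) * max (x ^ (b - α)) (x ^ (-1 - α)) := by ring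
        _ ≤ (c1 + c2 + 2 * K) * max (x ^ (b - α)) (x ^ (-1 - α)) := by
            refine mul_le_mul_of_nonneg_right ?_ hM0
            rw [hKdef]; linarith
end

section
/- Let d ≥ 1 be an integer and α ∈ (0,2). Then there exists a constant C = C(d,α) > 0 such that for all real numbers a > 0 and 0 < s ≤ r, ∫_0^∞ min(t^{-d/α-1}, r^{-d-α}) · min(1, a^{α/2}/√t) · min(1, s^{α/2}/√t)^{-1} dt ≤ C · r^{-d} · a^{α/2} · s^{-α/2}. -/
open MeasureTheory ENNReal Set

lemma aux_inv_min (x : ℝ) (hx : 0 < x) : (min 1 x)⁻¹ ≤ 1 + x⁻¹ := by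
  rcases le_total (1:ℝ) x with h | h
  · rw [min_eq_left h]; simp; positivity
  · rw [min_eq_right h]; nlinarith [inv_nonneg.2 hx.le]

lemma aux_lint_le {s : Set ℝ} (hs : MeasurableSet s) {f g : ℝ → ℝ}
    (hg : IntegrableOn g s) (hfg : ∀ x ∈ s, f x ≤ g x) (hg0 : ∀ x ∈ s, 0 ≤ g x) :
    ∫⁻ x in s, ENNReal.ofReal (f x) ≤ ENNReal.ofReal (∫ x in s, g x) := by
  rw [MeasureTheory.ofReal_integral_eq_lintegral_ofReal hg
    ((ae_restrict_iff' hs).2 (Filter.Eventually.of_forall hg0))]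
  exact lintegral_mono_ae ((ae_restrict_iff' hs).2
    (Filter.Eventually.of_forall fun x hx => ENNReal.ofReal_le_ofReal (hfg x hx)))

/-- Time-integral computation producing the elliptic Poisson kernel bound: for `d ≥ 1` and
`α ∈ (0,2)` there is `C = C(d,α) > 0` such that for all `a > 0` and `0 < s ≤ r`,
`∫_0^∞ (t^{-d/α-1} ∧ r^{-d-α}) (1 ∧ a^{α/2}/√t) (1 ∧ s^{α/2}/√t)^{-1} dt
  ≤ C r^{-d} a^{α/2} s^{-α/2}`. -/
theorem stmt_5 (d : ℕ) (hd : 1 ≤ d) (α : ℝ) (hα : α ∈ Set.Ioo (0 : ℝ) 2) :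
    ∃ C : ℝ, 0 < C ∧ ∀ a s r : ℝ, 0 < a → 0 < s → s ≤ r →
      ∫⁻ t in Set.Ioi (0 : ℝ),
          ENNReal.ofReal
            (min (t ^ (-(d : ℝ) / α - 1)) (r ^ (-(d : ℝ) - α)) *
              min 1 (a ^ (α / 2) / Real.sqrt t) * (min 1 (s ^ (α / 2) / Real.sqrt t))⁻¹)
        ≤ ENNReal.ofReal (C * r ^ (-(d : ℝ)) * a ^ (α / 2) * s ^ (-α / 2)) := by
  obtain ⟨hα0, hα2⟩ := hα
  have hdpos : (0:ℝ) < d := by exact_mod_cast hd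
  have hdα : 0 < (d:ℝ)/α := div_pos hdpos hα0
  set p : ℝ := -(d:ℝ)/α - 1 with hp_def
  have hp : p < -1 := by rw [hp_def, neg_div]; linarith
  have hpα : α * (p + 1) = -(d:ℝ) := by
    rw [hp_def]; field_simp; ring
  have hpα2 : α * (p + -(1/2) + 1) = -(d:ℝ) + -α/2 := by
    rw [hp_def]; field_simp; ring
  clear_value p
  have hq : p + -(1/2) < -1 := by linarith
  set k1 : ℝ := (-(p + -(1/2) + 1))⁻¹ with hk1_def
  set k2 : ℝ := (-(p + 1))⁻¹ with hk2_def
  have hk1 : 0 < k1 := by rw [hk1_def]; exact inv_pos.2 (by linarith)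
  have hk2 : 0 < k2 := by rw [hk2_def]; exact inv_pos.2 (by linarith)
  have hkr1 : ∀ x : ℝ, -x/(p + -(1/2) + 1) = k1 * x := by
    intro x; rw [hk1_def, inv_neg]; ring
  have hkr2 : ∀ x : ℝ, -x/(p + 1) = k2 * x := by
    intro x; rw [hk2_def, inv_neg]; ring
  clear_value k1 k2
  refine ⟨3 + k1 + k2, by linarith, ?_⟩
  intro a s r ha hs hsr
  have hr : 0 < r := lt_of_lt_of_le hs hsr
  set A := a ^ (α/2) with hA_def
  have hApos : 0 < A := Real.rpow_pos_of_pos ha _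
  set c := s ^ (-α/2) with hc_def
  have hcpos : 0 < c := Real.rpow_pos_of_pos hs _
  set R := r ^ (-(d:ℝ) - α) with hR_def
  have hRpos : 0 < R := Real.rpow_pos_of_pos hr _
  set T := r ^ α with hT_def
  have hT : 0 < T := Real.rpow_pos_of_pos hr _
  set X := r ^ (-(d:ℝ)) with hX_def
  have hX : 0 < X := Real.rpow_pos_of_pos hr _
  -- base comparison
  have hrc : r ^ (-α/2) ≤ c := by
    rw [hc_def]
    exact Real.rpow_le_rpow_of_nonpos hs hsr (by rw [neg_div]; linarith)
  -- rpow algebra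
  have eRT : R * T = X := by
    rw [hR_def, hT_def, hX_def, ← Real.rpow_add hr]; congr 1; ring
  have eHalf : R * T ^ ((1/2):ℝ) = X * r ^ (-α/2) := by
    rw [hR_def, hT_def, hX_def, ← Real.rpow_mul hr.le, ← Real.rpow_add hr,
      ← Real.rpow_add hr]
    congr 1; ring
  have eQ : T ^ (p + -(1/2) + 1) = X * r ^ (-α/2) := by
    rw [hT_def, hX_def, ← Real.rpow_mul hr.le, ← Real.rpow_add hr, hpα2]
  have eP : T ^ (p + 1) = X := by
    rw [hT_def, hX_def, ← Real.rpow_mul hr.le, hpα]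
  -- pointwise bound
  have key : ∀ t ∈ Ioi (0:ℝ),
      min (t ^ p) R * min 1 (A / Real.sqrt t) * (min 1 (s ^ (α/2) / Real.sqrt t))⁻¹
        ≤ min (t ^ p) R * (A * t ^ (-(1/2):ℝ) + A * c) := by
    intro t ht
    have htpos : (0:ℝ) < t := ht
    have hsq : 0 < Real.sqrt t := Real.sqrt_pos.2 htpos
    have hS : 0 < s ^ (α/2) := Real.rpow_pos_of_pos hs _
    have hmin0 : 0 ≤ min (t ^ p) R := le_min (Real.rpow_nonneg htpos.le _) hRpos.le
    have h2 : (min 1 (s ^ (α/2) / Real.sqrt t))⁻¹ ≤ 1 + Real.sqrt t / s ^ (α/2) := by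
      have := aux_inv_min (s ^ (α/2) / Real.sqrt t) (by positivity)
      rwa [inv_div] at this
    have h1 : min 1 (A / Real.sqrt t) ≤ A / Real.sqrt t := min_le_right _ _
    have hprod : min 1 (A / Real.sqrt t) * (min 1 (s ^ (α/2) / Real.sqrt t))⁻¹
        ≤ (A / Real.sqrt t) * (1 + Real.sqrt t / s ^ (α/2)) :=
      mul_le_mul h1 h2 (by positivity) (by positivity)
    have hx1 : t ^ (-(1/2):ℝ) = (Real.sqrt t)⁻¹ := by
      rw [Real.rpow_neg htpos.le, Real.sqrt_eq_rpow]
    have hx2 : c = (s ^ (α/2))⁻¹ := by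
      rw [hc_def, neg_div, Real.rpow_neg hs.le]
    have heq : (A / Real.sqrt t) * (1 + Real.sqrt t / s ^ (α/2))
        = A * t ^ (-(1/2):ℝ) + A * c := by
      rw [hx1, hx2]; field_simp
    calc min (t ^ p) R * min 1 (A / Real.sqrt t) * (min 1 (s ^ (α/2) / Real.sqrt t))⁻¹
        = min (t ^ p) R * (min 1 (A / Real.sqrt t) * (min 1 (s ^ (α/2) / Real.sqrt t))⁻¹) :=
          mul_assoc _ _ _
      _ ≤ min (t ^ p) R * ((A / Real.sqrt t) * (1 + Real.sqrt t / s ^ (α/2))) :=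
          mul_le_mul_of_nonneg_left hprod hmin0
      _ = min (t ^ p) R * (A * t ^ (-(1/2):ℝ) + A * c) := by rw [heq]
  -- split
  have hsplit : ∫⁻ t in Ioi (0:ℝ),
      ENNReal.ofReal (min (t ^ p) R * min 1 (A / Real.sqrt t)
        * (min 1 (s ^ (α/2) / Real.sqrt t))⁻¹)
      ≤ (∫⁻ t in Ioc (0:ℝ) T, ENNReal.ofReal (min (t ^ p) R * min 1 (A / Real.sqrt t)
        * (min 1 (s ^ (α/2) / Real.sqrt t))⁻¹))
      + ∫⁻ t in Ioi T, ENNReal.ofReal (min (t ^ p) R * min 1 (A / Real.sqrt t)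
        * (min 1 (s ^ (α/2) / Real.sqrt t))⁻¹) := by
    rw [← Set.Ioc_union_Ioi_eq_Ioi hT.le]
    exact lintegral_union_le _ _ _
  -- piece 1
  have hint_half : IntegrableOn (fun t : ℝ => t ^ (-(1/2):ℝ)) (Ioc (0:ℝ) T) :=
    (intervalIntegrable_iff_integrableOn_Ioc_of_le hT.le).1
      (intervalIntegral.intervalIntegrable_rpow' (by norm_num))
  have hg1int : IntegrableOn (fun t : ℝ => R * A * t ^ (-(1/2):ℝ) + R * (A * c)) (Ioc 0 T) :=
    (hint_half.const_mul (R * A)).add (integrableOn_const measure_Ioc_lt_top.ne)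
  have hI1 : (∫⁻ t in Ioc (0:ℝ) T, ENNReal.ofReal (min (t ^ p) R * min 1 (A / Real.sqrt t)
        * (min 1 (s ^ (α/2) / Real.sqrt t))⁻¹))
      ≤ ENNReal.ofReal (∫ t in Ioc (0:ℝ) T, (R * A * t ^ (-(1/2):ℝ) + R * (A * c))) := by
    refine aux_lint_le measurableSet_Ioc hg1int (fun t htm => ?_) (fun t htm => ?_)
    · refine (key t htm.1).trans ?_
      have hb : min (t ^ p) R * (A * t ^ (-(1/2):ℝ) + A * c)
          ≤ R * (A * t ^ (-(1/2):ℝ) + A * c) := by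
        refine mul_le_mul_of_nonneg_right (min_le_right _ _) ?_
        have := htm.1.le
        positivity
      exact hb.trans (le_of_eq (by ring))
    · have := htm.1.le
      positivity
  have hval_half : ∫ t in Ioc (0:ℝ) T, t ^ (-(1/2):ℝ) = 2 * T ^ ((1/2):ℝ) := by
    rw [← intervalIntegral.integral_of_le hT.le, integral_rpow (Or.inl (by norm_num))]
    rw [Real.zero_rpow (by norm_num)]
    norm_num
    ring
  have hv1 : ∫ t in Ioc (0:ℝ) T, (R * A * t ^ (-(1/2):ℝ) + R * (A * c))
      = R * A * (2 * T ^ ((1/2):ℝ)) + R * (A * c) * T := by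
    rw [MeasureTheory.integral_add (hint_half.const_mul (R * A))
      (integrableOn_const measure_Ioc_lt_top.ne),
      MeasureTheory.integral_const_mul, hval_half, MeasureTheory.setIntegral_const,
      Real.volume_real_Ioc_of_le hT.le, smul_eq_mul]
    ring
  -- piece 2
  have hint_q : IntegrableOn (fun t : ℝ => t ^ (p + -(1/2))) (Ioi T) :=
    integrableOn_Ioi_rpow_of_lt hq hT
  have hint_p : IntegrableOn (fun t : ℝ => t ^ p) (Ioi T) :=
    integrableOn_Ioi_rpow_of_lt hp hT
  have hg2int : IntegrableOn (fun t : ℝ => A * t ^ (p + -(1/2)) + A * c * t ^ p) (Ioi T) :=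
    (hint_q.const_mul A).add (hint_p.const_mul (A * c))
  have hI2 : (∫⁻ t in Ioi T, ENNReal.ofReal (min (t ^ p) R * min 1 (A / Real.sqrt t)
        * (min 1 (s ^ (α/2) / Real.sqrt t))⁻¹))
      ≤ ENNReal.ofReal (∫ t in Ioi T, (A * t ^ (p + -(1/2)) + A * c * t ^ p)) := by
    refine aux_lint_le measurableSet_Ioi hg2int (fun t htm => ?_) (fun t htm => ?_)
    · have htpos : (0:ℝ) < t := hT.trans htm
      refine (key t htpos).trans ?_
      have hb : min (t ^ p) R * (A * t ^ (-(1/2):ℝ) + A * c)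
          ≤ t ^ p * (A * t ^ (-(1/2):ℝ) + A * c) := by
        refine mul_le_mul_of_nonneg_right (min_le_left _ _) ?_
        have := htpos.le
        positivity
      refine hb.trans (le_of_eq ?_)
      rw [Real.rpow_add htpos]
      ring
    · have : (0:ℝ) < t := hT.trans htm
      have := this.le
      positivity
  have hv2 : ∫ t in Ioi T, (A * t ^ (p + -(1/2)) + A * c * t ^ p)
      = A * (k1 * T ^ (p + -(1/2) + 1)) + A * c * (k2 * T ^ (p + 1)) := by
    rw [MeasureTheory.integral_add (hint_q.const_mul A) (hint_p.const_mul (A * c)),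
      MeasureTheory.integral_const_mul, MeasureTheory.integral_const_mul,
      integral_Ioi_rpow_of_lt hq hT, integral_Ioi_rpow_of_lt hp hT,
      hkr1, hkr2]
  -- nonnegativity of the two integrals
  have hv1nn : 0 ≤ ∫ t in Ioc (0:ℝ) T, (R * A * t ^ (-(1/2):ℝ) + R * (A * c)) := by
    refine setIntegral_nonneg measurableSet_Ioc (fun t htm => ?_)
    have := htm.1.le
    positivity
  have hv2nn : 0 ≤ ∫ t in Ioi T, (A * t ^ (p + -(1/2)) + A * c * t ^ p) := by
    refine setIntegral_nonneg measurableSet_Ioi (fun t htm => ?_)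
    have : (0:ℝ) ≤ t := (hT.trans htm).le
    positivity
  -- final real inequality
  have hfin : (∫ t in Ioc (0:ℝ) T, (R * A * t ^ (-(1/2):ℝ) + R * (A * c)))
      + (∫ t in Ioi T, (A * t ^ (p + -(1/2)) + A * c * t ^ p))
      ≤ (3 + k1 + k2) * X * A * c := by
    rw [hv1, hv2]
    have m1 : R * T ^ ((1/2):ℝ) ≤ X * c := by
      rw [eHalf]
      exact mul_le_mul_of_nonneg_left hrc hX.le
    have m2 : T ^ (p + -(1/2) + 1) ≤ X * c := by
      rw [eQ]
      exact mul_le_mul_of_nonneg_left hrc hX.le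
    have m1' : 2 * A * (R * T ^ ((1/2):ℝ)) ≤ 2 * A * (X * c) :=
      mul_le_mul_of_nonneg_left m1 (by positivity)
    have m2' : A * k1 * T ^ (p + -(1/2) + 1) ≤ A * k1 * (X * c) :=
      mul_le_mul_of_nonneg_left m2 (by positivity)
    have m3 : A * c * (R * T) = A * c * X := by rw [eRT]
    have m4 : A * c * (k2 * T ^ (p + 1)) = A * c * (k2 * X) := by rw [eP]
    linarith [m1', m2', m3, m4]
  calc ∫⁻ t in Ioi (0:ℝ), ENNReal.ofReal (min (t ^ p) R * min 1 (A / Real.sqrt t)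
        * (min 1 (s ^ (α/2) / Real.sqrt t))⁻¹)
      ≤ _ := hsplit
    _ ≤ ENNReal.ofReal (∫ t in Ioc (0:ℝ) T, (R * A * t ^ (-(1/2):ℝ) + R * (A * c)))
        + ENNReal.ofReal (∫ t in Ioi T, (A * t ^ (p + -(1/2)) + A * c * t ^ p)) :=
        add_le_add hI1 hI2
    _ = ENNReal.ofReal ((∫ t in Ioc (0:ℝ) T, (R * A * t ^ (-(1/2):ℝ) + R * (A * c)))
        + (∫ t in Ioi T, (A * t ^ (p + -(1/2)) + A * c * t ^ p))) :=
        (ENNReal.ofReal_add hv1nn hv2nn).symm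
    _ ≤ ENNReal.ofReal ((3 + k1 + k2) * X * A * c) := ENNReal.ofReal_le_ofReal hfin
end

section
/- Let d ≥ 1 be an integer and α ∈ (0,2). Then there exists a constant C = C(d,α) > 0 such that for every t > 0, every x ∈ ℝ^d with x¹ > 0, and every z ∈ ℝ^d with z¹ < 0, ∫_{{y ∈ ℝ^d : y¹ > 0}} min(t^{-d/α}, t·|x-y|^{-d-α}) · min(1, (y¹)^{α/2}/√t) · |y-z|^{-d-α} dy ≤ C · min(t^{-d/α-1}, |x-z|^{-d-α}) · min(1, |z¹|^{α/2}/√t)^{-1}. -/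
open MeasureTheory ENNReal Metric Set

lemma coord_abs_le_norm {d : ℕ} (w : EuclideanSpace ℝ (Fin d)) (i : Fin d) :
    |w i| ≤ ‖w‖ := by
  rw [EuclideanSpace.norm_eq, ← Real.sqrt_sq_eq_abs (w i)]
  apply Real.sqrt_le_sqrt
  have h := Finset.single_le_sum (f := fun j => ‖w j‖ ^ 2) (fun j _ => by positivity)
    (Finset.mem_univ i)
  simpa [Real.norm_eq_abs, sq_abs] using h

lemma tail_lemma (d : ℕ) (s : ℝ) (hs : 0 < s) :
    ∃ K : ℝ, 0 < K ∧ ∀ a : ℝ, 0 < a →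
      ∫⁻ w in {w : EuclideanSpace ℝ (Fin d) | a ≤ ‖w‖},
        ENNReal.ofReal (‖w‖ ^ (-(d : ℝ) - s)) ≤ ENNReal.ofReal (K * a ^ (-s)) := by
  set E := EuclideanSpace ℝ (Fin d)
  have hfr : (Module.finrank ℝ E : ℝ) = (d : ℝ) := by
    rw [finrank_euclideanSpace_fin]
  set p : ℝ := (d : ℝ) + s with hp
  have hps : -(d : ℝ) - s = -p := by ring
  have hmeas : Measurable fun w : E => ENNReal.ofReal (‖w‖ ^ (-(d:ℝ) - s)) := by fun_prop
  have hsetmeas : ∀ a : ℝ, MeasurableSet {w : E | a ≤ ‖w‖} := fun a =>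
    measurableSet_le measurable_const measurable_norm
  set I1 : ℝ≥0∞ := ∫⁻ w in {w : E | 1 ≤ ‖w‖}, ENNReal.ofReal (‖w‖ ^ (-(d:ℝ) - s)) with hI1def
  have hI1 : I1 < ⊤ := by
    have hbound : ∀ w : E, w ∈ {w : E | 1 ≤ ‖w‖} →
        ENNReal.ofReal (‖w‖ ^ (-(d:ℝ) - s)) ≤
          ENNReal.ofReal ((2:ℝ) ^ p) * ENNReal.ofReal ((1 + ‖w‖) ^ (-p)) := by
      intro w hw
      simp only [mem_setOf_eq] at hw
      have hw0 : (0:ℝ) < ‖w‖ := lt_of_lt_of_le one_pos hw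
      rw [← ENNReal.ofReal_mul (by positivity)]
      apply ENNReal.ofReal_le_ofReal
      rw [hps]
      have h1 : (1:ℝ) + ‖w‖ ≤ 2 * ‖w‖ := by linarith
      have h2 : ((2:ℝ) * ‖w‖) ^ (-p) ≤ (1 + ‖w‖) ^ (-p) :=
        Real.rpow_le_rpow_of_nonpos (by positivity) h1 (by simp only [hp]; push_cast; nlinarith [Nat.cast_nonneg (α := ℝ) d])
      have h3 : ((2:ℝ) * ‖w‖) ^ (-p) = (2:ℝ) ^ (-p) * ‖w‖ ^ (-p) :=
        Real.mul_rpow (by norm_num) (norm_nonneg w)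
      have h4 : ‖w‖ ^ (-p) = (2:ℝ) ^ p * ((2:ℝ) ^ (-p) * ‖w‖ ^ (-p)) := by
        rw [← mul_assoc, ← Real.rpow_add (by norm_num), add_neg_cancel, Real.rpow_zero, one_mul]
      rw [h4, ← h3]
      exact mul_le_mul_of_nonneg_left h2 (by positivity)
    calc I1 ≤ ∫⁻ w in {w : E | 1 ≤ ‖w‖},
          ENNReal.ofReal ((2:ℝ) ^ p) * ENNReal.ofReal ((1 + ‖w‖) ^ (-p)) :=
        setLIntegral_mono (by fun_prop) hbound
      _ ≤ ∫⁻ w : E, ENNReal.ofReal ((2:ℝ) ^ p) * ENNReal.ofReal ((1 + ‖w‖) ^ (-p)) :=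
        setLIntegral_le_lintegral _ _
      _ = ENNReal.ofReal ((2:ℝ) ^ p) * ∫⁻ w : E, ENNReal.ofReal ((1 + ‖w‖) ^ (-p)) :=
        lintegral_const_mul' _ _ ofReal_ne_top
      _ < ⊤ := by
        apply ENNReal.mul_lt_top ofReal_lt_top
        apply finite_integral_one_add_norm
        rw [hfr, hp]; linarith
  refine ⟨I1.toReal + 1, by positivity, fun a ha => ?_⟩
  -- change of variables w = a • u
  have hmap := Measure.map_addHaar_smul (volume : Measure E) (ne_of_gt ha)
  set f : E → ℝ≥0∞ := fun w => ({w : E | a ≤ ‖w‖}).indicator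
    (fun w => ENNReal.ofReal (‖w‖ ^ (-(d:ℝ) - s))) w with hfdef
  have hfmeas : Measurable f := hmeas.indicator (hsetmeas a)
  have hLHS : ∫⁻ w in {w : E | a ≤ ‖w‖}, ENNReal.ofReal (‖w‖ ^ (-(d:ℝ) - s))
      = ∫⁻ w, f w := (lintegral_indicator (hsetmeas a) _).symm
  have hcomp : ∫⁻ u : E, f (a • u) = ENNReal.ofReal (a ^ (-p)) * I1 := by
    have hptwise : ∀ u : E, f (a • u) =
        ENNReal.ofReal (a ^ (-p)) *
          ({u : E | 1 ≤ ‖u‖}).indicator (fun u => ENNReal.ofReal (‖u‖ ^ (-(d:ℝ) - s))) u := by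
      intro u
      simp only [hfdef]
      have hnorm : ‖a • u‖ = a * ‖u‖ := by
        rw [norm_smul, Real.norm_eq_abs, abs_of_pos ha]
      by_cases hu : 1 ≤ ‖u‖
      · have hmem : a • u ∈ {w : E | a ≤ ‖w‖} := by
          simp only [mem_setOf_eq, hnorm]
          nlinarith
        rw [indicator_of_mem hmem, indicator_of_mem (show u ∈ {u : E | 1 ≤ ‖u‖} from hu)]
        rw [hnorm, hps, Real.mul_rpow ha.le (norm_nonneg u),
          ENNReal.ofReal_mul (by positivity)]
      · have hmem : a • u ∉ {w : E | a ≤ ‖w‖} := by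
          simp only [mem_setOf_eq, hnorm, not_le] at hu ⊢
          nlinarith
        rw [indicator_of_notMem hmem, indicator_of_notMem (show u ∉ {u : E | 1 ≤ ‖u‖} from hu), mul_zero]
    simp_rw [hptwise]
    rw [lintegral_const_mul' _ _ ofReal_ne_top, lintegral_indicator (hsetmeas 1)]
  have hmapped : ∫⁻ u : E, f (a • u) = ENNReal.ofReal |((a:ℝ) ^ Module.finrank ℝ E)⁻¹| * ∫⁻ w, f w := by
    rw [← lintegral_map hfmeas (measurable_const_smul a), hmap]
    simp [lintegral_smul_measure]
  have hA : ENNReal.ofReal (a ^ (Module.finrank ℝ E)) *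
      ENNReal.ofReal |((a:ℝ) ^ Module.finrank ℝ E)⁻¹| = 1 := by
    rw [← ENNReal.ofReal_mul (by positivity)]
    rw [abs_of_pos (by positivity), mul_inv_cancel₀ (by positivity)]
    exact ENNReal.ofReal_one
  have hfin : ∫⁻ w, f w = ENNReal.ofReal (a ^ (Module.finrank ℝ E)) * (ENNReal.ofReal (a ^ (-p)) * I1) := by
    calc ∫⁻ w, f w = 1 * ∫⁻ w, f w := (one_mul _).symm
      _ = ENNReal.ofReal (a ^ (Module.finrank ℝ E)) *
          (ENNReal.ofReal |((a:ℝ) ^ Module.finrank ℝ E)⁻¹| * ∫⁻ w, f w) := by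
          rw [← mul_assoc, hA]
      _ = _ := by rw [← hmapped, hcomp]
  rw [hLHS, hfin]
  have hpow : ENNReal.ofReal (a ^ (Module.finrank ℝ E)) * ENNReal.ofReal (a ^ (-p))
      = ENNReal.ofReal (a ^ (-s)) := by
    rw [← ENNReal.ofReal_mul (by positivity)]
    congr 1
    rw [← Real.rpow_natCast a (Module.finrank ℝ E), ← Real.rpow_add ha]
    congr 1
    rw [hfr]; ring
  rw [← mul_assoc, hpow]
  have : I1 ≤ ENNReal.ofReal (I1.toReal + 1) := by
    calc I1 = ENNReal.ofReal I1.toReal := (ENNReal.ofReal_toReal hI1.ne).symm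
      _ ≤ _ := ENNReal.ofReal_le_ofReal (by linarith)
  calc ENNReal.ofReal (a ^ (-s)) * I1 ≤ ENNReal.ofReal (a ^ (-s)) * ENNReal.ofReal (I1.toReal + 1) :=
      mul_le_mul_right this _
    _ = ENNReal.ofReal ((I1.toReal + 1) * a ^ (-s)) := by
      rw [← ENNReal.ofReal_mul (by positivity), mul_comm]

lemma min_int_lemma (d : ℕ) (hd : 1 ≤ d) (α : ℝ) (hα : 0 < α) :
    ∃ K : ℝ, 0 < K ∧ ∀ t : ℝ, 0 < t →
      ∫⁻ w : EuclideanSpace ℝ (Fin d),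
        ENNReal.ofReal (min (t ^ (-(d : ℝ)/α - 1)) (‖w‖ ^ (-(d : ℝ) - α)))
        ≤ ENNReal.ofReal (K * t⁻¹) := by
  set E := EuclideanSpace ℝ (Fin d)
  haveI : Nonempty (Fin d) := ⟨⟨0, hd⟩⟩
  obtain ⟨K2, hK2, htail⟩ := tail_lemma d α hα
  set V : ℝ := (volume (ball (0:E) 1)).toReal with hV
  have hV0 : 0 ≤ V := ENNReal.toReal_nonneg
  refine ⟨V + K2, by positivity, fun t ht => ?_⟩
  set r0 : ℝ := t ^ (1/α) with hr0
  have hr0pos : 0 < r0 := Real.rpow_pos_of_pos ht _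
  set T : ℝ := t ^ (-(d : ℝ)/α - 1) with hT
  have hTpos : 0 < T := Real.rpow_pos_of_pos ht _
  have hsplit := (lintegral_add_compl (μ := (volume : Measure E))
    (fun w : E => ENNReal.ofReal (min T (‖w‖ ^ (-(d : ℝ) - α)))) measurableSet_ball
    (A := ball (0:E) r0)).symm
  rw [hsplit]
  have hball : ∫⁻ w in ball (0:E) r0, ENNReal.ofReal (min T (‖w‖ ^ (-(d : ℝ) - α)))
      ≤ ENNReal.ofReal (V * t⁻¹) := by
    have h1 : ∫⁻ w in ball (0:E) r0, ENNReal.ofReal (min T (‖w‖ ^ (-(d : ℝ) - α)))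
        ≤ ∫⁻ _ in ball (0:E) r0, ENNReal.ofReal T :=
      setLIntegral_mono measurable_const (fun w _ =>
        ENNReal.ofReal_le_ofReal (min_le_left _ _))
    have h2 : ∫⁻ _ in ball (0:E) r0, ENNReal.ofReal T
        = ENNReal.ofReal T * volume (ball (0:E) r0) := setLIntegral_const _ _
    have h3 : volume (ball (0:E) r0) = ENNReal.ofReal (r0 ^ Module.finrank ℝ E) *
        volume (ball (0:E) 1) := Measure.addHaar_ball volume _ hr0pos.le
    have h4 : volume (ball (0:E) 1) ≤ ENNReal.ofReal V := by
      rw [hV, ENNReal.ofReal_toReal measure_ball_lt_top.ne]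
    calc _ ≤ ENNReal.ofReal T * volume (ball (0:E) r0) := h1.trans h2.le
      _ ≤ ENNReal.ofReal T * (ENNReal.ofReal (r0 ^ Module.finrank ℝ E) * ENNReal.ofReal V) := by
          rw [h3]; exact mul_le_mul_right (mul_le_mul_right h4 _) _
      _ = ENNReal.ofReal (T * r0 ^ Module.finrank ℝ E * V) := by
          rw [ENNReal.ofReal_mul (by positivity), ENNReal.ofReal_mul hTpos.le, mul_assoc]
      _ = ENNReal.ofReal (V * t⁻¹) := by
          congr 1
          have : r0 ^ Module.finrank ℝ E = t ^ ((d:ℝ)/α) := by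
            rw [finrank_euclideanSpace_fin, ← Real.rpow_natCast r0 d, hr0,
              ← Real.rpow_mul ht.le]
            congr 1; ring
          rw [this, hT, ← Real.rpow_add ht]
          have : -(d:ℝ)/α - 1 + (d:ℝ)/α = -1 := by ring
          rw [this, Real.rpow_neg_one]; ring
  have hcompl : ∫⁻ w in (ball (0:E) r0)ᶜ, ENNReal.ofReal (min T (‖w‖ ^ (-(d : ℝ) - α)))
      ≤ ENNReal.ofReal (K2 * t⁻¹) := by
    have hset : (ball (0:E) r0)ᶜ = {w : E | r0 ≤ ‖w‖} := by
      ext w; simp [mem_ball_zero_iff, not_lt]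
    have h1 : ∫⁻ w in (ball (0:E) r0)ᶜ, ENNReal.ofReal (min T (‖w‖ ^ (-(d : ℝ) - α)))
        ≤ ∫⁻ w in {w : E | r0 ≤ ‖w‖}, ENNReal.ofReal (‖w‖ ^ (-(d : ℝ) - α)) := by
      rw [hset]
      exact setLIntegral_mono (by fun_prop) (fun w _ =>
        ENNReal.ofReal_le_ofReal (min_le_right _ _))
    have h2 := htail r0 hr0pos
    have h3 : r0 ^ (-α) = t⁻¹ := by
      rw [hr0, ← Real.rpow_mul ht.le]
      have : 1/α * (-α) = -1 := by field_simp
      rw [this, Real.rpow_neg_one]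
    rw [h3] at h2
    exact h1.trans h2
  calc _ ≤ ENNReal.ofReal (V * t⁻¹) + ENNReal.ofReal (K2 * t⁻¹) := add_le_add hball hcompl
    _ = ENNReal.ofReal ((V + K2) * t⁻¹) := by
      rw [← ENNReal.ofReal_add (by positivity) (by positivity)]; ring_nf

lemma translate_set_lintegral (d : ℕ) (z : EuclideanSpace ℝ (Fin d)) (a q : ℝ) :
    ∫⁻ y in {y : EuclideanSpace ℝ (Fin d) | a ≤ ‖y - z‖}, ENNReal.ofReal (‖y - z‖ ^ q)
      = ∫⁻ w in {w : EuclideanSpace ℝ (Fin d) | a ≤ ‖w‖}, ENNReal.ofReal (‖w‖ ^ q) := by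
  let E := EuclideanSpace ℝ (Fin d)
  have hmp : MeasurePreserving (fun w : E => w + z) volume volume :=
    measurePreserving_add_right volume z
  have hemb : MeasurableEmbedding (fun w : E => w + z) :=
    (MeasurableEquiv.addRight z).measurableEmbedding
  have := hmp.setLIntegral_comp_emb hemb
    (fun y : E => ENNReal.ofReal (‖y - z‖ ^ q)) {w : E | a ≤ ‖w‖}
  have himg : (fun w : E => w + z) '' {w : E | a ≤ ‖w‖} = {y : E | a ≤ ‖y - z‖} := by
    ext y
    constructor
    · rintro ⟨w, hw, rfl⟩; simpa using hw
    · intro hy; exact ⟨y - z, hy, by simp⟩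
  rw [himg] at this
  rw [← this]
  congr 1
  ext w
  rw [add_sub_cancel_right]

lemma translate_lintegral (d : ℕ) (x : EuclideanSpace ℝ (Fin d)) (T q : ℝ) :
    ∫⁻ y : EuclideanSpace ℝ (Fin d), ENNReal.ofReal (min T (‖x - y‖ ^ q))
      = ∫⁻ w : EuclideanSpace ℝ (Fin d), ENNReal.ofReal (min T (‖w‖ ^ q)) := by
  let E := EuclideanSpace ℝ (Fin d)
  have hmp : MeasurePreserving (fun w : E => w + x) volume volume :=
    measurePreserving_add_right volume x
  have h1 : ∀ y : E, ENNReal.ofReal (min T (‖x - y‖ ^ q))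
      = ENNReal.ofReal (min T (‖y - x‖ ^ q)) := by
    intro y; rw [norm_sub_rev]
  simp_rw [h1]
  calc ∫⁻ y : E, ENNReal.ofReal (min T (‖y - x‖ ^ q))
      = ∫⁻ w : E, ENNReal.ofReal (min T (‖w + x - x‖ ^ q)) :=
        (hmp.lintegral_comp (f := fun y : E => ENNReal.ofReal (min T (‖y - x‖ ^ q)))
          (by fun_prop)).symm
    _ = ∫⁻ w : E, ENNReal.ofReal (min T (‖w‖ ^ q)) := by simp only [add_sub_cancel_right]

/-- Core estimate in the upper bound for the parabolic Poisson kernel of the half space: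
for `d ≥ 1` and `α ∈ (0,2)` there is `C = C(d,α) > 0` such that for all `t > 0`,
`x` with `x¹ > 0` and `z` with `z¹ < 0`,
`∫_{y¹>0} (t^{-d/α} ∧ t|x-y|^{-d-α}) (1 ∧ (y¹)^{α/2}/√t) |y-z|^{-d-α} dy
  ≤ C (t^{-d/α-1} ∧ |x-z|^{-d-α}) (1 ∧ |z¹|^{α/2}/√t)^{-1}`. -/
theorem stmt_6 (d : ℕ) (hd : 1 ≤ d) (α : ℝ) (hα : α ∈ Set.Ioo (0 : ℝ) 2) :
    ∃ C : ℝ, 0 < C ∧ ∀ t : ℝ, 0 < t → ∀ x z : EuclideanSpace ℝ (Fin d),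
      0 < x ⟨0, hd⟩ → z ⟨0, hd⟩ < 0 →
      ∫⁻ y in {y : EuclideanSpace ℝ (Fin d) | 0 < y ⟨0, hd⟩},
          ENNReal.ofReal
            (min (t ^ (-(d : ℝ) / α)) (t * ‖x - y‖ ^ (-(d : ℝ) - α)) *
              min 1 ((y ⟨0, hd⟩) ^ (α / 2) / Real.sqrt t) * ‖y - z‖ ^ (-(d : ℝ) - α))
        ≤ ENNReal.ofReal
            (C * min (t ^ (-(d : ℝ) / α - 1)) (‖x - z‖ ^ (-(d : ℝ) - α)) *
              (min 1 (|z ⟨0, hd⟩| ^ (α / 2) / Real.sqrt t))⁻¹) := by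
  obtain ⟨hα0, hα2⟩ := hα
  have hd0 : (0:ℝ) ≤ (d:ℝ) := Nat.cast_nonneg d
  obtain ⟨K1, hK1, htail⟩ := tail_lemma d (α/2) (by linarith)
  obtain ⟨K2, hK2, hminint⟩ := min_int_lemma d hd α hα0
  set p : ℝ := (d:ℝ) + α with hp
  have hppos : 0 < p := by simp only [hp]; linarith
  set c2 : ℝ := (2:ℝ) ^ p with hc2def
  have hc2 : 1 ≤ c2 := Real.one_le_rpow one_le_two hppos.le
  have hc2pos : 0 < c2 := lt_of_lt_of_le one_pos hc2
  refine ⟨c2 * (K1 + K2), by positivity, ?_⟩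
  intro t ht x z hx hz
  set i : Fin d := ⟨0, hd⟩ with hi
  set st : ℝ := Real.sqrt t with hst_def
  have hst : 0 < st := Real.sqrt_pos.mpr ht
  set a : ℝ := -(z i) with ha_def
  have ha : 0 < a := by simp only [ha_def]; linarith
  have hza : |z i| = a := abs_of_neg hz
  set T : ℝ := t ^ (-(d:ℝ)/α - 1) with hT_def
  have hT : 0 < T := Real.rpow_pos_of_pos ht _
  have hxznorm : 0 < ‖x - z‖ := by
    have h1 : (x - z) i = x i - z i := by simp
    have h2 := coord_abs_le_norm (x - z) i
    rw [h1] at h2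
    have : x i - z i ≤ |x i - z i| := le_abs_self _
    linarith
  set X : ℝ := ‖x - z‖ ^ (-(d:ℝ) - α) with hX_def
  have hX : 0 < X := Real.rpow_pos_of_pos hxznorm _
  set m : ℝ := min T X with hm_def
  have hm : 0 < m := lt_min hT hX
  set c0 : ℝ := t * c2 * m with hc0_def
  have hc0 : 0 ≤ c0 := by positivity
  set F1 : EuclideanSpace ℝ (Fin d) → ℝ := fun y => st⁻¹ * ‖y - z‖ ^ (-(d:ℝ) - α/2) with hF1_def
  set F2 : EuclideanSpace ℝ (Fin d) → ℝ := fun y => min T (‖x - y‖ ^ (-(d:ℝ) - α)) with hF2_def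
  have hF1nn : ∀ y, 0 ≤ F1 y := fun y => by
    simp only [hF1_def]; positivity
  have hF2nn : ∀ y, 0 ≤ F2 y := fun y =>
    le_min hT.le (Real.rpow_nonneg (norm_nonneg _) _)
  -- pointwise bound
  have key : ∀ y ∈ {y : EuclideanSpace ℝ (Fin d) | 0 < y i},
      ENNReal.ofReal
        (min (t ^ (-(d : ℝ) / α)) (t * ‖x - y‖ ^ (-(d : ℝ) - α)) *
          min 1 ((y i) ^ (α / 2) / st) * ‖y - z‖ ^ (-(d : ℝ) - α))
        ≤ ENNReal.ofReal (c0 * (F1 y + F2 y)) := by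
    intro y hy
    simp only [mem_setOf_eq] at hy
    apply ENNReal.ofReal_le_ofReal
    set A : ℝ := ‖x - y‖ ^ (-(d:ℝ) - α) with hA_def
    set B : ℝ := ‖y - z‖ ^ (-(d:ℝ) - α) with hB_def
    set g : ℝ := min 1 ((y i) ^ (α / 2) / st) with hg_def
    have hA0 : 0 ≤ A := Real.rpow_nonneg (norm_nonneg _) _
    have hB0 : 0 ≤ B := Real.rpow_nonneg (norm_nonneg _) _
    have hg0 : 0 ≤ g := le_min zero_le_one (by positivity)
    have hg1 : g ≤ 1 := min_le_left _ _
    have hminA0 : 0 ≤ min T A := le_min hT.le hA0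
    have hyz1 : y i + a ≤ ‖y - z‖ := by
      have h1 : (y - z) i = y i - z i := by simp
      have h2 := coord_abs_le_norm (y - z) i
      rw [h1] at h2
      have h3 : y i - z i ≤ |y i - z i| := le_abs_self _
      simp only [ha_def]; linarith
    have hyR : y i ≤ ‖y - z‖ := by linarith
    have haR : a ≤ ‖y - z‖ := by linarith
    have hR : 0 < ‖y - z‖ := by linarith
    -- step 1
    have step1 : min (t ^ (-(d : ℝ) / α)) (t * A) = t * min T A := by
      have e1 : t * T = t ^ (-(d:ℝ)/α) := by
        rw [hT_def]
        calc t * t ^ (-(d:ℝ)/α - 1) = t ^ (1:ℝ) * t ^ (-(d:ℝ)/α - 1) := by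
              rw [Real.rpow_one]
          _ = t ^ ((1:ℝ) + (-(d:ℝ)/α - 1)) := (Real.rpow_add ht _ _).symm
          _ = t ^ (-(d:ℝ)/α) := by norm_num
      rw [← e1]
      exact ((monotone_mul_left_of_nonneg ht.le).map_min (a := T) (b := A)).symm
    -- step 2
    have step2 : g * B ≤ st⁻¹ * ‖y - z‖ ^ (-(d:ℝ) - α/2) := by
      have h21 : g ≤ (y i) ^ (α/2) * st⁻¹ := by
        rw [← div_eq_mul_inv]; exact min_le_right _ _
      have h22 : (y i) ^ (α/2) ≤ ‖y - z‖ ^ (α/2) :=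
        Real.rpow_le_rpow hy.le hyR (by linarith)
      calc g * B ≤ ((y i) ^ (α/2) * st⁻¹) * B := mul_le_mul_of_nonneg_right h21 hB0
        _ ≤ (‖y - z‖ ^ (α/2) * st⁻¹) * B := by
            apply mul_le_mul_of_nonneg_right _ hB0
            exact mul_le_mul_of_nonneg_right h22 (by positivity)
        _ = st⁻¹ * (‖y - z‖ ^ (α/2) * ‖y - z‖ ^ (-(d:ℝ) - α)) := by rw [hB_def]; ring
        _ = st⁻¹ * ‖y - z‖ ^ (-(d:ℝ) - α/2) := by
            rw [← Real.rpow_add hR]; congr 1; ring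
    -- step 3 : triangle
    have step3 : min T A * B ≤ c2 * m * (B + min T A) := by
      rcases le_total T X with hTX | hXT
      · have hmT : m = T := min_eq_left hTX
        calc min T A * B ≤ T * B := mul_le_mul_of_nonneg_right (min_le_left _ _) hB0
          _ = m * B := by rw [hmT]
          _ ≤ c2 * (m * B) := le_mul_of_one_le_left (mul_nonneg hm.le hB0) hc2
          _ = c2 * m * B := by ring
          _ ≤ c2 * m * (B + min T A) :=
              mul_le_mul_of_nonneg_left (le_add_of_nonneg_right hminA0) (by positivity)
      · have hmX : m = X := min_eq_right hXT
        have htri : ‖x - z‖ ≤ ‖x - y‖ + ‖y - z‖ := by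
          have h := dist_triangle x y z
          simpa [dist_eq_norm] using h
        have hexp_nonpos : -(d:ℝ) - α ≤ 0 := by linarith
        have hhalf_eq : ∀ u : ℝ, 0 < u → ‖x - z‖ / 2 ≤ u →
            u ^ (-(d:ℝ) - α) ≤ c2 * X := by
          intro u hu huu
          have h1 : u ^ (-(d:ℝ) - α) ≤ (‖x - z‖ / 2) ^ (-(d:ℝ) - α) :=
            Real.rpow_le_rpow_of_nonpos (by positivity) huu hexp_nonpos
          have h2 : (‖x - z‖ / 2) ^ (-(d:ℝ) - α) = c2 * X := by
            rw [div_eq_mul_inv, Real.mul_rpow hxznorm.le (by norm_num)]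
            rw [Real.inv_rpow (by norm_num : (0:ℝ) ≤ 2), ← Real.rpow_neg (by norm_num)]
            rw [hX_def, hc2def, mul_comm]
            congr 1
            rw [hp]; ring
          linarith
        rcases le_total ‖x - z‖ (2 * ‖x - y‖) with hcase | hcase
        · have hxy0 : 0 < ‖x - y‖ := by linarith
          have hAle : A ≤ c2 * X := hhalf_eq ‖x - y‖ hxy0 (by linarith)
          calc min T A * B ≤ A * B := mul_le_mul_of_nonneg_right (min_le_right _ _) hB0
            _ ≤ (c2 * X) * B := mul_le_mul_of_nonneg_right hAle hB0
            _ = c2 * m * B := by rw [hmX]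
            _ ≤ c2 * m * (B + min T A) :=
                mul_le_mul_of_nonneg_left (le_add_of_nonneg_right hminA0) (by positivity)
        · have hBle : B ≤ c2 * X := hhalf_eq ‖y - z‖ hR (by linarith)
          calc min T A * B ≤ min T A * (c2 * X) := mul_le_mul_of_nonneg_left hBle hminA0
            _ = c2 * m * min T A := by rw [hmX]; ring
            _ ≤ c2 * m * (B + min T A) :=
                mul_le_mul_of_nonneg_left (le_add_of_nonneg_left hB0) (by positivity)
    -- combine
    have hfin : min T A * g * B ≤ c2 * m * (st⁻¹ * ‖y - z‖ ^ (-(d:ℝ) - α/2) + min T A) := by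
      calc min T A * g * B = (min T A * B) * g := by ring
        _ ≤ (c2 * m * (B + min T A)) * g := mul_le_mul_of_nonneg_right step3 hg0
        _ = c2 * m * (g * B) + c2 * m * (min T A * g) := by ring
        _ ≤ c2 * m * (st⁻¹ * ‖y - z‖ ^ (-(d:ℝ) - α/2)) + c2 * m * (min T A) := by
            apply add_le_add
            · exact mul_le_mul_of_nonneg_left step2 (by positivity)
            · exact mul_le_mul_of_nonneg_left (mul_le_of_le_one_right hminA0 hg1)
                (by positivity)
        _ = c2 * m * (st⁻¹ * ‖y - z‖ ^ (-(d:ℝ) - α/2) + min T A) := by ring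
    calc min (t ^ (-(d : ℝ) / α)) (t * A) * g * B = t * (min T A * g * B) := by
          rw [step1]; ring
      _ ≤ t * (c2 * m * (st⁻¹ * ‖y - z‖ ^ (-(d:ℝ) - α/2) + min T A)) :=
          mul_le_mul_of_nonneg_left hfin ht.le
      _ = c0 * (F1 y + F2 y) := by
          simp only [hc0_def, hF1_def, hF2_def, hA_def]; ring
  -- integral chain
  have hSmeas : MeasurableSet {y : EuclideanSpace ℝ (Fin d) | 0 < y i} :=
    measurableSet_lt measurable_const (EuclideanSpace.proj (𝕜 := ℝ) i).continuous.measurable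
  have hsub : {y : EuclideanSpace ℝ (Fin d) | 0 < y i} ⊆
      {y : EuclideanSpace ℝ (Fin d) | a ≤ ‖y - z‖} := by
    intro y hy
    simp only [mem_setOf_eq] at hy ⊢
    have h1 : (y - z) i = y i - z i := by simp
    have h2 := coord_abs_le_norm (y - z) i
    rw [h1] at h2
    have h3 : y i - z i ≤ |y i - z i| := le_abs_self _
    simp only [ha_def]; linarith
  calc ∫⁻ y in {y : EuclideanSpace ℝ (Fin d) | 0 < y i},
        ENNReal.ofReal
          (min (t ^ (-(d : ℝ) / α)) (t * ‖x - y‖ ^ (-(d : ℝ) - α)) *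
            min 1 ((y i) ^ (α / 2) / st) * ‖y - z‖ ^ (-(d : ℝ) - α))
      ≤ ∫⁻ y in {y : EuclideanSpace ℝ (Fin d) | 0 < y i},
          ENNReal.ofReal (c0 * (F1 y + F2 y)) :=
        setLIntegral_mono (by simp only [hF1_def, hF2_def]; fun_prop) key
    _ = ∫⁻ y in {y : EuclideanSpace ℝ (Fin d) | 0 < y i},
          ENNReal.ofReal c0 * (ENNReal.ofReal (F1 y) + ENNReal.ofReal (F2 y)) :=
        lintegral_congr (fun y => by
          rw [ENNReal.ofReal_mul hc0, ENNReal.ofReal_add (hF1nn y) (hF2nn y)])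
    _ = ENNReal.ofReal c0 * ∫⁻ y in {y : EuclideanSpace ℝ (Fin d) | 0 < y i},
          (ENNReal.ofReal (F1 y) + ENNReal.ofReal (F2 y)) :=
        lintegral_const_mul' _ _ ofReal_ne_top
    _ = ENNReal.ofReal c0 *
          ((∫⁻ y in {y : EuclideanSpace ℝ (Fin d) | 0 < y i}, ENNReal.ofReal (F1 y)) +
           (∫⁻ y in {y : EuclideanSpace ℝ (Fin d) | 0 < y i}, ENNReal.ofReal (F2 y))) := by
        rw [lintegral_add_left (by simp only [hF1_def]; fun_prop)]
    _ ≤ ENNReal.ofReal c0 *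
          (ENNReal.ofReal st⁻¹ * ENNReal.ofReal (K1 * a ^ (-(α/2))) +
           ENNReal.ofReal (K2 * t⁻¹)) := by
        apply mul_le_mul_right
        apply add_le_add
        · -- F1 part
          have e1 : ∫⁻ y in {y : EuclideanSpace ℝ (Fin d) | 0 < y i}, ENNReal.ofReal (F1 y)
              = ENNReal.ofReal st⁻¹ * ∫⁻ y in {y : EuclideanSpace ℝ (Fin d) | 0 < y i},
                  ENNReal.ofReal (‖y - z‖ ^ (-(d:ℝ) - α/2)) := by
            rw [← lintegral_const_mul' _ _ ofReal_ne_top]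
            exact lintegral_congr (fun y => by
              simp only [hF1_def]
              rw [ENNReal.ofReal_mul (by positivity)])
          rw [e1]
          apply mul_le_mul_right
          calc ∫⁻ y in {y : EuclideanSpace ℝ (Fin d) | 0 < y i},
                ENNReal.ofReal (‖y - z‖ ^ (-(d:ℝ) - α/2))
              ≤ ∫⁻ y in {y : EuclideanSpace ℝ (Fin d) | a ≤ ‖y - z‖},
                ENNReal.ofReal (‖y - z‖ ^ (-(d:ℝ) - α/2)) := lintegral_mono_set hsub
            _ = ∫⁻ w in {w : EuclideanSpace ℝ (Fin d) | a ≤ ‖w‖},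
                ENNReal.ofReal (‖w‖ ^ (-(d:ℝ) - α/2)) :=
                translate_set_lintegral d z a _
            _ ≤ ENNReal.ofReal (K1 * a ^ (-(α/2))) := htail a ha
        · -- F2 part
          calc ∫⁻ y in {y : EuclideanSpace ℝ (Fin d) | 0 < y i}, ENNReal.ofReal (F2 y)
              ≤ ∫⁻ y : EuclideanSpace ℝ (Fin d), ENNReal.ofReal (F2 y) :=
                setLIntegral_le_lintegral _ _
            _ = ∫⁻ w : EuclideanSpace ℝ (Fin d),
                  ENNReal.ofReal (min T (‖w‖ ^ (-(d:ℝ) - α))) := by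
                simp only [hF2_def]
                exact translate_lintegral d x T _
            _ ≤ ENNReal.ofReal (K2 * t⁻¹) := hminint t ht
    _ = ENNReal.ofReal (c0 * (st⁻¹ * (K1 * a ^ (-(α/2))) + K2 * t⁻¹)) := by
        rw [← ENNReal.ofReal_mul (by positivity), ← ENNReal.ofReal_add (by positivity)
          (by positivity), ← ENNReal.ofReal_mul hc0]
    _ ≤ ENNReal.ofReal (c2 * (K1 + K2) * m * (min 1 (|z i| ^ (α / 2) / st))⁻¹) := by
        apply ENNReal.ofReal_le_ofReal
        rw [hza]
        set μm : ℝ := min 1 (a ^ (α/2) / st) with hμm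
        have hμpos : 0 < μm := lt_min one_pos (by positivity)
        have hM1 : 1 ≤ μm⁻¹ := (one_le_inv₀ hμpos).mpr (min_le_left _ _)
        have hM2 : st * a ^ (-(α/2)) ≤ μm⁻¹ := by
          have h1 : μm ≤ a ^ (α/2) / st := min_le_right _ _
          have h2 := inv_anti₀ hμpos h1
          rw [inv_div, div_eq_mul_inv, Real.rpow_neg ha.le] at *
          exact le_trans (le_of_eq rfl) h2
        have htst : t * st⁻¹ = st := by
          rw [hst_def]
          rw [← Real.mul_self_sqrt ht.le]
          field_simp
          rw [Real.sqrt_sq (Real.sqrt_nonneg t)]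
        have htt : t * t⁻¹ = 1 := mul_inv_cancel₀ ht.ne'
        have hexpand : c0 * (st⁻¹ * (K1 * a ^ (-(α/2))) + K2 * t⁻¹)
            = c2 * m * (K1 * ((t * st⁻¹) * a ^ (-(α/2))) + K2 * (t * t⁻¹)) := by
          simp only [hc0_def]; ring
        rw [hexpand, htst, htt, mul_one]
        have hsum : K1 * (st * a ^ (-(α/2))) + K2 ≤ K1 * μm⁻¹ + K2 * μm⁻¹ :=
          add_le_add (mul_le_mul_of_nonneg_left hM2 hK1.le)
            (le_mul_of_one_le_right hK2.le hM1)
        calc c2 * m * (K1 * (st * a ^ (-(α/2))) + K2)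
            ≤ c2 * m * (K1 * μm⁻¹ + K2 * μm⁻¹) :=
              mul_le_mul_of_nonneg_left hsum (by positivity)
          _ = c2 * (K1 + K2) * m * μm⁻¹ := by ring
end

section
/- Let α > 0 and A, B ∈ ℝ satisfy A + 1/α > -1 and A + B/2 < 0. Then ∫_0^∞ min( s^{A-1}, max(s^{A+1/α}, 1) ) · (1 + √s)^B ds < ∞. -/
open MeasureTheory ENNReal Set

lemma aux_meas (A B c : ℝ) :
    AEStronglyMeasurable
      (fun s : ℝ => min (s ^ (A - 1)) (max (s ^ c) 1) * (1 + Real.sqrt s) ^ B)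
      (volume : Measure ℝ) := by
  apply Measurable.aestronglyMeasurable
  have h : Measurable Real.sqrt := Real.continuous_sqrt.measurable
  fun_prop

lemma pow_bound (B : ℝ) {s : ℝ} (hs : 1 ≤ s) :
    (1 + Real.sqrt s) ^ B ≤ 2 ^ |B| * s ^ (B / 2) := by
  have hs0 : (0:ℝ) < s := lt_of_lt_of_le one_pos hs
  have h1 : (1:ℝ) ≤ Real.sqrt s := by
    rw [show (1:ℝ) = Real.sqrt 1 by simp]; exact Real.sqrt_le_sqrt hs
  have hsq : Real.sqrt s = s ^ (1/2 : ℝ) := Real.sqrt_eq_rpow s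
  have hsB : (Real.sqrt s) ^ B = s ^ (B / 2) := by
    rw [hsq, ← Real.rpow_mul hs0.le]; ring_nf
  rcases le_or_gt 0 B with hB | hB
  · have : (1 + Real.sqrt s) ^ B ≤ (2 * Real.sqrt s) ^ B := by
      apply Real.rpow_le_rpow (by positivity) (by linarith) hB
    calc (1 + Real.sqrt s) ^ B ≤ (2 * Real.sqrt s) ^ B := this
      _ = 2 ^ B * (Real.sqrt s) ^ B := Real.mul_rpow (by norm_num) (by positivity)
      _ = 2 ^ B * s ^ (B / 2) := by rw [hsB]
      _ ≤ 2 ^ |B| * s ^ (B / 2) := by rw [abs_of_nonneg hB]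
  · have : (1 + Real.sqrt s) ^ B ≤ (Real.sqrt s) ^ B := by
      apply Real.rpow_le_rpow_of_nonpos (by positivity) (by linarith) hB.le
    calc (1 + Real.sqrt s) ^ B ≤ (Real.sqrt s) ^ B := this
      _ = s ^ (B / 2) := hsB
      _ ≤ 2 ^ |B| * s ^ (B / 2) :=
          le_mul_of_one_le_left (Real.rpow_nonneg hs0.le _)
            (Real.one_le_rpow one_le_two (abs_nonneg B))

/-- One-dimensional convergence lemma: if `α > 0`, `A + 1/α > -1` and `A + B/2 < 0`, then
`∫_0^∞ (s^{A-1} ∧ (s^{A+1/α} ∨ 1)) (1+√s)^B ds < ∞`. -/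
theorem stmt_10 (α A B : ℝ) (hα : 0 < α) (h1 : A + 1 / α > -1) (h2 : A + B / 2 < 0) :
    ∫⁻ s in Set.Ioi (0 : ℝ),
        ENNReal.ofReal
          (min (s ^ (A - 1)) (max (s ^ (A + 1 / α)) 1) * (1 + Real.sqrt s) ^ B)
      < ⊤ := by
  set f : ℝ → ℝ := fun s =>
    min (s ^ (A - 1)) (max (s ^ (A + 1 / α)) 1) * (1 + Real.sqrt s) ^ B with hf_def
  have hmeas : AEStronglyMeasurable f (volume : Measure ℝ) := aux_meas A B _
  -- integrability on (0,1]
  have hI1 : IntegrableOn f (Ioc (0:ℝ) 1) volume := by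
    have hg : IntegrableOn (fun s : ℝ => 2 ^ |B| * (s ^ (A + 1 / α) + 1)) (Ioc (0:ℝ) 1) volume := by
      apply Integrable.const_mul
      apply Integrable.add _ (integrableOn_const measure_Ioc_lt_top.ne)
      have h := intervalIntegral.intervalIntegrable_rpow' (a := 0) (b := 1)
        (r := A + 1 / α) (by linarith)
      rw [intervalIntegrable_iff_integrableOn_Ioc_of_le zero_le_one] at h
      exact h
    refine Integrable.mono' hg hmeas.restrict ?_
    filter_upwards [ae_restrict_mem measurableSet_Ioc] with s hs
    obtain ⟨hs0, hs1⟩ := hs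
    have hnn : 0 ≤ f s := by
      apply mul_nonneg
      · exact le_min (Real.rpow_nonneg hs0.le _) (le_max_of_le_right zero_le_one)
      · positivity
    rw [Real.norm_of_nonneg hnn]
    have hb : (1 + Real.sqrt s) ^ B ≤ 2 ^ |B| := by
      rcases le_or_gt 0 B with hB | hB
      · calc (1 + Real.sqrt s) ^ B ≤ 2 ^ B := by
              apply Real.rpow_le_rpow (by positivity) _ hB
              have := Real.sqrt_le_sqrt hs1
              simp only [Real.sqrt_one] at this; linarith
          _ ≤ 2 ^ |B| := by rw [abs_of_nonneg hB]
      · calc (1 + Real.sqrt s) ^ B ≤ 1 ^ B := by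
              apply Real.rpow_le_rpow_of_nonpos one_pos _ hB.le
              have := Real.sqrt_nonneg s; linarith
          _ = 1 := Real.one_rpow B
          _ ≤ 2 ^ |B| := Real.one_le_rpow one_le_two (abs_nonneg B)
    calc f s ≤ max (s ^ (A + 1 / α)) 1 * (1 + Real.sqrt s) ^ B :=
          mul_le_mul_of_nonneg_right (min_le_right _ _) (by positivity)
      _ ≤ (s ^ (A + 1 / α) + 1) * (2 ^ |B|) := by
          apply mul_le_mul _ hb (by positivity) (by positivity)
          exact max_le (le_add_of_nonneg_right zero_le_one)
            (le_add_of_nonneg_left (Real.rpow_nonneg hs0.le _))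
      _ = 2 ^ |B| * (s ^ (A + 1 / α) + 1) := mul_comm _ _
  -- integrability on (1,∞)
  have hI2 : IntegrableOn f (Ioi (1:ℝ)) volume := by
    have hg : IntegrableOn (fun s : ℝ => 2 ^ |B| * s ^ (A - 1 + B / 2)) (Ioi (1:ℝ)) volume :=
      (integrableOn_Ioi_rpow_of_lt (by linarith) one_pos).const_mul _
    refine Integrable.mono' hg hmeas.restrict ?_
    filter_upwards [ae_restrict_mem measurableSet_Ioi] with s hs
    have hs1 : (1:ℝ) ≤ s := le_of_lt hs
    have hs0 : (0:ℝ) < s := lt_of_lt_of_le one_pos hs1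
    have hnn : 0 ≤ f s := by
      apply mul_nonneg
      · exact le_min (Real.rpow_nonneg hs0.le _) (le_max_of_le_right zero_le_one)
      · positivity
    rw [Real.norm_of_nonneg hnn]
    calc f s ≤ s ^ (A - 1) * (2 ^ |B| * s ^ (B / 2)) := by
          apply mul_le_mul (min_le_left _ _) (pow_bound B hs1) (by positivity)
            (Real.rpow_nonneg hs0.le _)
      _ = 2 ^ |B| * s ^ (A - 1 + B / 2) := by
          rw [Real.rpow_add hs0]; ring
  have hI : IntegrableOn f (Ioi (0:ℝ)) volume := by
    have : Ioc (0:ℝ) 1 ∪ Ioi 1 = Ioi 0 := Ioc_union_Ioi_eq_Ioi zero_le_one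
    rw [← this]
    exact hI1.union hI2
  calc ∫⁻ s in Ioi (0:ℝ), ENNReal.ofReal (f s)
      ≤ ∫⁻ s in Ioi (0:ℝ), ‖f s‖₊ := lintegral_mono fun s => Real.ofReal_le_enorm _
    _ < ⊤ := hI.2
end
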